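/- arXiv:2108.03556 — 9 statements merged into one kernel-verified Lean document; each statement's English description precedes it below -/
import Mathlib

section
/- Let (g,[·,·],⟨·,·,·⟩) be a Lie-Yamaguti algebra over a field K of characteristic 0, V a K-vector space, ρ: g→End(V) a linear map and μ: g×g→End(V) a bilinear map, and set D(x,y):=μ(y,x)−μ(x,y)+ρ(x)ρ(y)−ρ(y)ρ(x)−ρ([x,y]). Then (V;ρ,μ) is a representation of g if and only if the brackets on the direct sum g⊕V defined by [x+u,y+v] := [x,y]+ρ(x)v−ρ(y)u and ⟨x+u,y+v,z+w⟩ := ⟨x,y,z⟩+D(x,y)w+μ(y,z)u−μ(x,z)v (for x,y,z in g and u,v,w in V) make g⊕V into a Lie-Yamaguti algebra (the semidirect product). -/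
/-- A map of two variables that is linear in each variable separately. -/
def IsBilin (K : Type*) {M N P : Type*} [Field K] [AddCommGroup M] [Module K M]
    [AddCommGroup N] [Module K N] [AddCommGroup P] [Module K P]
    (f : M → N → P) : Prop :=
  (∀ y, IsLinearMap K fun x => f x y) ∧ (∀ x, IsLinearMap K fun y => f x y)

/-- A map of three variables that is linear in each variable separately. -/
def IsTrilin (K : Type*) {M P : Type*} [Field K] [AddCommGroup M] [Module K M]
    [AddCommGroup P] [Module K P] (f : M → M → M → P) : Prop :=
  (∀ y z, IsLinearMap K fun x => f x y z) ∧
  (∀ x z, IsLinearMap K fun y => f x y z) ∧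
  (∀ x y, IsLinearMap K fun z => f x y z)

/-- A Lie-Yamaguti algebra structure: a bilinear skew-symmetric binary bracket `b` and a
trilinear ternary bracket `t`, skew-symmetric in its first two arguments, satisfying
(LY1)-(LY4). -/
def IsLieYamaguti (K : Type*) {g : Type*} [Field K] [CharZero K] [AddCommGroup g] [Module K g]
    (b : g → g → g) (t : g → g → g → g) : Prop :=
  IsBilin K b ∧ IsTrilin K t ∧
  (∀ x y, b x y = - b y x) ∧
  (∀ x y z, t x y z = - t y x z) ∧
  (∀ x y z, b (b x y) z + b (b y z) x + b (b z x) y + t x y z + t y z x + t z x y = 0) ∧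
  (∀ x y z w, t (b x y) z w + t (b y z) x w + t (b z x) y w = 0) ∧
  (∀ x y z w, t x y (b z w) = b (t x y z) w + b z (t x y w)) ∧
  (∀ x y z w u, t x y (t z w u) = t (t x y z) w u + t z (t x y w) u + t z w (t x y u))

/-- The operator `D(x,y) = μ(y,x) − μ(x,y) + ρ(x)ρ(y) − ρ(y)ρ(x) − ρ([x,y])`. -/
def LYD (K : Type*) {g V : Type*} [Field K] [CharZero K] [AddCommGroup g] [Module K g]
    [AddCommGroup V] [Module K V]
    (b : g → g → g) (ρ : g → Module.End K V) (μ : g → g → Module.End K V)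
    (x y : g) : Module.End K V :=
  μ y x - μ x y + ρ x * ρ y - ρ y * ρ x - ρ (b x y)

/-- A representation of a Lie-Yamaguti algebra `(g, b, t)` on `V`. -/
def IsLYRep (K : Type*) {g V : Type*} [Field K] [CharZero K] [AddCommGroup g] [Module K g]
    [AddCommGroup V] [Module K V]
    (b : g → g → g) (t : g → g → g → g)
    (ρ : g → Module.End K V) (μ : g → g → Module.End K V) : Prop :=
  IsLinearMap K ρ ∧ IsBilin K μ ∧
  (∀ x y z, μ (b x y) z - μ x z * ρ y + μ y z * ρ x = 0) ∧
  (∀ x y z, μ x (b y z) - ρ y * μ x z + ρ z * μ x y = 0) ∧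
  (∀ x y z, ρ (t x y z) = LYD K b ρ μ x y * ρ z - ρ z * LYD K b ρ μ x y) ∧
  (∀ x y z w, μ z w * μ x y - μ y w * μ x z - μ x (t y z w) + LYD K b ρ μ y z * μ x w = 0) ∧
  (∀ x y z w, μ (t x y z) w + μ z (t x y w) = LYD K b ρ μ x y * μ z w - μ z w * LYD K b ρ μ x y)

/-- A relative Rota-Baxter operator on a Lie-Yamaguti algebra `(g, b, t)` with respect to a
representation `(V; ρ, μ)`. -/
def IsRelRB (K : Type*) {g V : Type*} [Field K] [CharZero K] [AddCommGroup g] [Module K g]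
    [AddCommGroup V] [Module K V]
    (b : g → g → g) (t : g → g → g → g)
    (ρ : g → Module.End K V) (μ : g → g → Module.End K V) (T : V → g) : Prop :=
  IsLinearMap K T ∧
  (∀ u v, b (T u) (T v) = T (ρ (T u) v - ρ (T v) u)) ∧
  (∀ u v w, t (T u) (T v) (T w) =
    T (LYD K b ρ μ (T u) (T v) w + μ (T v) (T w) u - μ (T u) (T w) v))

/-- The commutator `[x,y]_C = x*y − y*x`. -/
def preC {A : Type*} [AddCommGroup A] (m : A → A → A) (x y : A) : A := m x y - m y x

/-- The associator `(x,y,z) = (x*y)*z − x*(y*z)`. -/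
def preAssoc {A : Type*} [AddCommGroup A] (m : A → A → A) (x y z : A) : A :=
  m (m x y) z - m x (m y z)

/-- `{x,y,z}_D = {z,y,x} − {z,x,y} + (y,x,z) − (x,y,z)`. -/
def preD {A : Type*} [AddCommGroup A] (m : A → A → A) (br : A → A → A → A) (x y z : A) : A :=
  br z y x - br z x y + preAssoc m y x z - preAssoc m x y z

/-- A pre-Lie-Yamaguti algebra structure on `A`. -/
def IsPreLY (K : Type*) {A : Type*} [Field K] [CharZero K] [AddCommGroup A] [Module K A]
    (m : A → A → A) (br : A → A → A → A) : Prop :=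
  IsBilin K m ∧ IsTrilin K br ∧
  (∀ x y z w, br z (preC m x y) w - br (m y z) x w + br (m x z) y w = 0) ∧
  (∀ x y z w, br x y (preC m z w) = m z (br x y w) - m w (br x y z)) ∧
  (∀ x y z w t, br (br x y z) w t - br (br x y w) z t - br x y (preD m br z w t)
      - br x y (br z w t) + br x y (br w z t) + preD m br z w (br x y t) = 0) ∧
  (∀ x y z w t, br z (preD m br x y w) t + br z (br x y w) t - br z (br y x w) t
      + br z w (preD m br x y t) + br z w (br x y t) - br z w (br y x t)
      = preD m br x y (br z w t) - br (preD m br x y z) w t) ∧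
  (∀ x y z w, m (preD m br x y z) w + m (br x y z) w - m (br y x z) w
      = preD m br x y (m z w) - m z (preD m br x y w))

/-- The ternary bracket `⟨x,y,z⟩_C = {x,y,z}_D + {x,y,z} − {y,x,z}` of the subadjacent
Lie-Yamaguti algebra of a pre-Lie-Yamaguti algebra. -/
def subT {A : Type*} [AddCommGroup A] (m : A → A → A) (br : A → A → A → A) (x y z : A) : A :=
  preD m br x y z + br x y z - br y x z

/-- A symplectic structure on a Lie-Yamaguti algebra `(g, b, t)`: a nondegenerate
skew-symmetric bilinear form satisfying the two cocycle conditions. -/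
def IsSymplectic (K : Type*) {g : Type*} [Field K] [CharZero K] [AddCommGroup g] [Module K g]
    (b : g → g → g) (t : g → g → g → g) (ω : g → g → K) : Prop :=
  IsBilin K ω ∧ (∀ x y, ω x y = - ω y x) ∧ (∀ x, (∀ y, ω x y = 0) → x = 0) ∧
  (∀ x y z, ω x (b y z) + ω y (b z x) + ω z (b x y) = 0) ∧
  (∀ x y z w, ω z (t x y w) - ω x (t w z y) + ω y (t w z x) - ω w (t x y z) = 0)

/-- The dual map `ρ*` defined by `(ρ*(x) α)(v) = −α(ρ(x) v)`. -/
def dualRho (K : Type*) {g V : Type*} [Field K] [CharZero K] [AddCommGroup g] [Module K g]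
    [AddCommGroup V] [Module K V] (ρ : g → Module.End K V) (x : g) :
    Module.End K (Module.Dual K V) := -(ρ x).dualMap

/-- The dual map `μ*` defined by `(μ*(x,y) α)(v) = −α(μ(x,y) v)`. -/
def dualMu (K : Type*) {g V : Type*} [Field K] [CharZero K] [AddCommGroup g] [Module K g]
    [AddCommGroup V] [Module K V] (μ : g → g → Module.End K V) (x y : g) :
    Module.End K (Module.Dual K V) := -(μ x y).dualMap

/-- Left multiplication `L_x` of a pre-Lie-Yamaguti algebra, as a linear endomorphism. -/
def Llin (K : Type*) {A : Type*} [Field K] [CharZero K] [AddCommGroup A] [Module K A]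
    (m : A → A → A) (hm : IsBilin K m) (x : A) : Module.End K A :=
  IsLinearMap.mk' (fun v => m x v) (hm.2 x)

/-- `𝓡(x,y) : z ↦ {z,x,y}` of a pre-Lie-Yamaguti algebra, as a linear endomorphism. -/
def Rlin (K : Type*) {A : Type*} [Field K] [CharZero K] [AddCommGroup A] [Module K A]
    (br : A → A → A → A) (hbr : IsTrilin K br) (x y : A) : Module.End K A :=
  IsLinearMap.mk' (fun v => br v x y) (hbr.1 x y)

/-- `𝓛(x,y) : z ↦ {x,y,z}_D` of a pre-Lie-Yamaguti algebra, as a linear endomorphism. -/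
def Dlin (K : Type*) {A : Type*} [Field K] [CharZero K] [AddCommGroup A] [Module K A]
    (m : A → A → A) (br : A → A → A → A) (hm : IsBilin K m) (hbr : IsTrilin K br)
    (x y : A) : Module.End K A :=
  Rlin K br hbr y x - Rlin K br hbr x y
    + (Llin K m hm (m y x) - Llin K m hm y * Llin K m hm x)
    - (Llin K m hm (m x y) - Llin K m hm x * Llin K m hm y)

/-!
On `g × V` the `V`-component of each Lie-Yamaguti axiom is linear in the `V`-entries, so it
splits into one identity per `V`-entry. Conversely, putting a single nonzero `V`-entry into
(LY2)-(LY4) for the semidirect product gives back (R1)-(R5) one by one.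

In the forward direction the `V`-component of (LY1) holds by the definition of `D` alone; the
only identities for `D` that are needed beyond (R1)-(R5) are
`D([x,y],z) + D([y,z],x) + D([z,x],y) = 0` (the image of (LY1) under `ρ`, rewritten with
(R1)-(R3)) and `[D(x,y), D(z,w)] = D(⟨x,y,z⟩,w) + D(z,⟨x,y,w⟩)` (the image of (LY3) under `ρ`,
combined with (R3) and (R5)).
-/

namespace LieYamaguti

variable {K g V : Type*} [Field K] [AddCommGroup g] [Module K g] [AddCommGroup V] [Module K V]
  {b : g → g → g} {t : g → g → g → g} {ρ : g → Module.End K V} {μ : g → g → Module.End K V}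

def semidirectBr (b : g → g → g) (ρ : g → Module.End K V) (p q : g × V) : g × V :=
  (b p.1 q.1, ρ p.1 q.2 - ρ q.1 p.2)

theorem isBilin_semidirectBr (hb : IsBilin K b) (hρ : IsLinearMap K ρ) :
    IsBilin K (semidirectBr b ρ) := by
  refine ⟨fun q => ⟨fun p p' => ?_, fun c p => ?_⟩, fun p => ⟨fun q q' => ?_, fun c q => ?_⟩⟩ <;>
    ext <;>
    simp only [semidirectBr, Prod.fst_add, Prod.snd_add, Prod.smul_fst, Prod.smul_snd,
      (hb.1 _).map_add, (hb.2 _).map_add, (hb.1 _).map_smul, (hb.2 _).map_smul, hρ.map_add,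
      hρ.map_smul, map_add, map_smul, LinearMap.add_apply, LinearMap.smul_apply] <;>
    module

variable [CharZero K]

def semidirectTr (b : g → g → g) (t : g → g → g → g) (ρ : g → Module.End K V)
    (μ : g → g → Module.End K V) (p q r : g × V) : g × V :=
  (t p.1 q.1 r.1, LYD K b ρ μ p.1 q.1 r.2 + μ q.1 r.1 p.2 - μ p.1 r.1 q.2)

theorem LYD_apply (x y : g) (v : V) : LYD K b ρ μ x y v =
    μ y x v - μ x y v + ρ x (ρ y v) - ρ y (ρ x v) - ρ (b x y) v := rfl

theorem isBilin_LYD (hb : IsBilin K b) (hρ : IsLinearMap K ρ) (hμ : IsBilin K μ) :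
    IsBilin K (LYD K b ρ μ) := by
  refine ⟨fun y => ⟨fun x x' => ?_, fun c x => ?_⟩, fun x => ⟨fun y y' => ?_, fun c y => ?_⟩⟩ <;>
    simp only [LYD, (hμ.1 _).map_add, (hμ.2 _).map_add, (hb.1 _).map_add, (hb.2 _).map_add,
      hρ.map_add, (hμ.1 _).map_smul, (hμ.2 _).map_smul, (hb.1 _).map_smul, (hb.2 _).map_smul,
      hρ.map_smul, add_mul, mul_add, smul_mul_assoc, mul_smul_comm] <;>
    module

theorem LYD_swap (hb : ∀ x y, b x y = -b y x) (hρ : IsLinearMap K ρ) (x y : g) :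
    LYD K b ρ μ x y = -LYD K b ρ μ y x := by
  simp only [LYD, hb x y, hρ.map_neg]
  abel

theorem LYD_bracket_cyclic (h : IsLieYamaguti K b t) (hrep : IsLYRep K b t ρ μ) (x y z : g) :
    LYD K b ρ μ (b x y) z + LYD K b ρ μ (b y z) x + LYD K b ρ μ (b z x) y = 0 := by
  obtain ⟨hρ, -, R1, R2, R3, -, -⟩ := hrep
  have hμ_bracket_left : ∀ x y z, μ (b x y) z = μ x z * ρ y - μ y z * ρ x := fun x y z =>
    eq_of_sub_eq_zero (by rw [← R1 x y z]; abel)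
  have hμ_bracket_right : ∀ x y z, μ z (b x y) = ρ x * μ z y - ρ y * μ z x := fun x y z =>
    eq_of_sub_eq_zero (by rw [← R2 z x y]; abel)
  have hρLY1 : ρ (b (b x y) z) + ρ (b (b y z) x) + ρ (b (b z x) y)
      + ρ (t x y z) + ρ (t y z x) + ρ (t z x y) = 0 := by
    simpa only [hρ.map_add, hρ.map_zero] using congrArg ρ (h.2.2.2.2.1 x y z)
  simp only [LYD, hμ_bracket_left, hμ_bracket_right, R3] at hρLY1 ⊢
  linear_combination (norm := noncomm_ring) -hρLY1

theorem LYD_commutator (h : IsLieYamaguti K b t) (hrep : IsLYRep K b t ρ μ) (x y z w : g) :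
    LYD K b ρ μ x y * LYD K b ρ μ z w - LYD K b ρ μ z w * LYD K b ρ μ x y =
      LYD K b ρ μ (t x y z) w + LYD K b ρ μ z (t x y w) := by
  obtain ⟨hρ, -, -, -, R3, -, R5⟩ := hrep
  have hρLY3 : ρ (t x y (b z w)) = ρ (b (t x y z) w) + ρ (b z (t x y w)) := by
    rw [h.2.2.2.2.2.2.1 x y z w, hρ.map_add]
  linear_combination (norm := (simp only [LYD, R3]; noncomm_ring))
    R5 x y z w - R5 x y w z - hρLY3

theorem isTrilin_semidirectTr (hb : IsBilin K b) (ht : IsTrilin K t) (hρ : IsLinearMap K ρ)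
    (hμ : IsBilin K μ) : IsTrilin K (semidirectTr b t ρ μ) := by
  have hD := isBilin_LYD hb hρ hμ
  refine ⟨fun q r => ⟨fun p p' => ?_, fun c p => ?_⟩, fun p r => ⟨fun q q' => ?_, fun c q => ?_⟩,
    fun p q => ⟨fun r r' => ?_, fun c r => ?_⟩⟩ <;>
    ext <;>
    simp only [semidirectTr, Prod.fst_add, Prod.snd_add, Prod.smul_fst, Prod.smul_snd,
      (ht.1 _ _).map_add, (ht.2.1 _ _).map_add, (ht.2.2 _ _).map_add, (ht.1 _ _).map_smul,
      (ht.2.1 _ _).map_smul, (ht.2.2 _ _).map_smul, (hD.1 _).map_add, (hD.2 _).map_add,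
      (hD.1 _).map_smul, (hD.2 _).map_smul, (hμ.1 _).map_add, (hμ.2 _).map_add,
      (hμ.1 _).map_smul, (hμ.2 _).map_smul, map_add, map_smul, LinearMap.add_apply,
      LinearMap.smul_apply] <;>
    module

theorem isLieYamaguti_semidirect (h : IsLieYamaguti K b t) (hrep : IsLYRep K b t ρ μ) :
    IsLieYamaguti K (semidirectBr b ρ) (semidirectTr b t ρ μ) := by
  obtain ⟨hb, ht, hbs, hts, LY1, LY2, LY3, LY4⟩ := id h
  obtain ⟨hρ, hμ, R1, R2, R3, R4, R5⟩ := id hrep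
  have cyc := fun x y z v => LinearMap.congr_fun (LYD_bracket_cyclic h hrep x y z) v
  have comm := fun x y z w v => LinearMap.congr_fun (LYD_commutator h hrep x y z w) v
  have R1' := fun x y z v => LinearMap.congr_fun (R1 x y z) v
  have R2' := fun x y z v => LinearMap.congr_fun (R2 x y z) v
  have R3' := fun x y z v => LinearMap.congr_fun (R3 x y z) v
  have R4' := fun x y z w v => LinearMap.congr_fun (R4 x y z w) v
  have R5' := fun x y z w v => LinearMap.congr_fun (R5 x y z w) v
  simp only [LinearMap.add_apply, LinearMap.sub_apply, Module.End.mul_apply,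
    LinearMap.zero_apply] at cyc comm R1' R2' R3' R4' R5'
  refine ⟨isBilin_semidirectBr hb hρ, isTrilin_semidirectTr hb ht hρ hμ, fun p q => ?_,
    fun p q r => ?_, fun p q r => ?_, fun p q r s => ?_, fun p q r s => ?_,
    fun p q r s u => ?_⟩ <;> ext <;>
    simp only [semidirectBr, semidirectTr, Prod.fst_add, Prod.snd_add, Prod.fst_neg,
      Prod.snd_neg, Prod.fst_zero, Prod.snd_zero, map_add, map_sub]
  · exact hbs _ _
  · abel
  · exact hts _ _ _
  · rw [LYD_swap hbs hρ p.1 q.1, LinearMap.neg_apply]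
    abel
  · exact LY1 _ _ _
  · simp only [LYD_apply]
    abel
  · exact LY2 _ _ _ _
  · linear_combination (norm := abel) cyc p.1 q.1 r.1 s.2 - R1' p.1 q.1 s.1 r.2
      - R1' q.1 r.1 s.1 p.2 - R1' r.1 p.1 s.1 q.2
  · exact LY3 _ _ _ _
  · linear_combination (norm := abel) R2' q.1 r.1 s.1 p.2 - R2' p.1 r.1 s.1 q.2
      - R3' p.1 q.1 r.1 s.2 + R3' p.1 q.1 s.1 r.2
  · exact LY4 _ _ _ _ _
  · linear_combination (norm := abel) comm p.1 q.1 r.1 s.1 u.2 - R4' q.1 r.1 s.1 u.1 p.2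
      + R4' p.1 r.1 s.1 u.1 q.2 + R5' p.1 q.1 r.1 u.1 s.2 - R5' p.1 q.1 s.1 u.1 r.2

theorem isLYRep_of_semidirect (hb : IsBilin K b) (ht : IsTrilin K t) (hρ : IsLinearMap K ρ)
    (hμ : IsBilin K μ) (h' : IsLieYamaguti K (semidirectBr b ρ) (semidirectTr b t ρ μ)) :
    IsLYRep K b t ρ μ := by
  obtain ⟨-, -, -, -, -, LY2, LY3, LY4⟩ := h'
  have hD := isBilin_LYD hb hρ hμ
  have R1 := fun x y z (v : V) => congrArg Prod.snd (LY2 (y, 0) (0, v) (x, 0) (z, 0))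
  have R2 := fun x y z (v : V) => congrArg Prod.snd (LY3 (x, 0) (0, v) (y, 0) (z, 0))
  have R3 := fun x y z (v : V) => congrArg Prod.snd (LY3 (x, 0) (y, 0) (z, 0) (0, v))
  have R4 := fun x y z w (v : V) => congrArg Prod.snd (LY4 (0, v) (x, 0) (y, 0) (z, 0) (w, 0))
  have R5 := fun x y z w (v : V) => congrArg Prod.snd (LY4 (x, 0) (y, 0) (0, v) (z, 0) (w, 0))
  simp only [semidirectBr, semidirectTr, Prod.snd_add, Prod.snd_zero, (hb.1 _).map_zero,
    (hb.2 _).map_zero, (ht.1 _ _).map_zero, (ht.2.1 _ _).map_zero, (ht.2.2 _ _).map_zero,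
    hρ.map_zero, (hμ.1 _).map_zero, (hμ.2 _).map_zero, (hD.1 _).map_zero, (hD.2 _).map_zero,
    map_zero, sub_zero, zero_sub, add_zero, zero_add, map_neg] at R1 R2 R3 R4 R5
  refine ⟨hρ, hμ, fun x y z => ?_, fun x y z => ?_, fun x y z => ?_, fun x y z w => ?_,
    fun x y z w => ?_⟩ <;> ext v <;>
    simp only [LinearMap.add_apply, LinearMap.sub_apply, Module.End.mul_apply,
      LinearMap.zero_apply]
  · linear_combination (norm := abel) -R1 x y z v
  · linear_combination (norm := abel) -R2 x y z v
  · linear_combination (norm := abel) -R3 x y z v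
  · linear_combination (norm := abel) -R4 x y z w v
  · linear_combination (norm := abel) -R5 x y z w v

end LieYamaguti

/-- `(V;ρ,μ)` is a representation iff the semidirect sum is a
Lie-Yamaguti algebra. -/
theorem statement2 (K g V : Type*) [Field K] [CharZero K] [AddCommGroup g] [Module K g]
    [AddCommGroup V] [Module K V]
    (b : g → g → g) (t : g → g → g → g) (h : IsLieYamaguti K b t)
    (ρ : g → Module.End K V) (μ : g → g → Module.End K V)
    (hρ : IsLinearMap K ρ) (hμ : IsBilin K μ) :
    IsLYRep K b t ρ μ ↔
      IsLieYamaguti K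
        (fun p q : g × V => (b p.1 q.1, ρ p.1 q.2 - ρ q.1 p.2))
        (fun p q r : g × V =>
          (t p.1 q.1 r.1, LYD K b ρ μ p.1 q.1 r.2 + μ q.1 r.1 p.2 - μ p.1 r.1 q.2)) :=
  ⟨LieYamaguti.isLieYamaguti_semidirect h,
    LieYamaguti.isLYRep_of_semidirect h.1 h.2.1 hρ hμ⟩
end

section
/- Let (V;ρ,μ) be a representation of a Lie-Yamaguti algebra (g,[·,·],⟨·,·,·⟩). Define ρ*: g→End(V*) by (ρ*(x)α)(v)=−α(ρ(x)v) and define the bilinear map (−μ*τ): g×g→End(V*) by ((−μ*τ)(x,y)α)(v)=α(μ(y,x)v). Then (V*; ρ*, −μ*τ) is a representation of g on the dual space V* (called the dual representation). -/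
/-! Dualization `f ↦ f*` of endomorphisms is additive and reverses products. Hence the operator
`D` of `(ρ*, −μ*τ)` is `(−D(x,y))*`, and each identity (R1)–(R5) for `(ρ*, −μ*τ)` is the dual of
an identity in `End V`: (R1) and (R2) are exchanged, (R3) and (R5) dualize to themselves, and the
dual (R4) is minus the sum of (R4) and (R5). -/

namespace LinearMap

variable {R M : Type*} [CommRing R] [AddCommGroup M] [Module R M]

theorem dualMap_mul (f g : Module.End R M) : (f * g).dualMap = g.dualMap * f.dualMap :=
  (dualMap_comp_dualMap g f).symm

theorem dualMap_add (f g : Module.End R M) : (f + g).dualMap = f.dualMap + g.dualMap :=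
  map_add Module.Dual.transpose f g

theorem dualMap_sub (f g : Module.End R M) : (f - g).dualMap = f.dualMap - g.dualMap :=
  map_sub Module.Dual.transpose f g

theorem dualMap_neg (f : Module.End R M) : (-f).dualMap = -f.dualMap :=
  map_neg Module.Dual.transpose f

theorem dualMap_zero : (0 : Module.End R M).dualMap = 0 :=
  map_zero Module.Dual.transpose

end LinearMap

open LinearMap

section DualRepresentation

variable {K g V : Type*} [Field K] [AddCommGroup g] [Module K g] [AddCommGroup V] [Module K V]

theorem IsLinearMap.dualMap_comp {f : g → Module.End K V} (hf : IsLinearMap K f) :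
    IsLinearMap K fun x => (f x).dualMap :=
  (Module.Dual.transpose ∘ₗ IsLinearMap.mk' f hf).isLinear

theorem isBilin_dualMap_swap {μ : g → g → Module.End K V} (hμ : IsBilin K μ) :
    IsBilin K fun x y => (μ y x).dualMap :=
  ⟨fun y => (hμ.2 y).dualMap_comp, fun x => (hμ.1 x).dualMap_comp⟩

variable [CharZero K]

theorem dualRho_eq_dualMap_neg (ρ : g → Module.End K V) (x : g) :
    dualRho K ρ x = (-ρ x).dualMap :=
  (dualMap_neg (ρ x)).symm

theorem isLinearMap_dualRho {ρ : g → Module.End K V} (hρ : IsLinearMap K ρ) :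
    IsLinearMap K (dualRho K ρ) := by
  rw [funext (dualRho_eq_dualMap_neg ρ)]
  exact (-IsLinearMap.mk' ρ hρ).isLinear.dualMap_comp

theorem LYD_dualRho (b : g → g → g) (ρ : g → Module.End K V)
    (μ : g → g → Module.End K V) (x y : g) :
    LYD K b (dualRho K ρ) (fun x y => (μ y x).dualMap) x y = (-LYD K b ρ μ x y).dualMap := by
  simp only [LYD, dualRho_eq_dualMap_neg, ← dualMap_mul, ← dualMap_sub, ← dualMap_add]
  congr 1
  noncomm_ring

end DualRepresentation

theorem statement4_general (K g V : Type*) [Field K] [CharZero K] [AddCommGroup g] [Module K g]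
    [AddCommGroup V] [Module K V]
    (b : g → g → g) (t : g → g → g → g)
    (ρ : g → Module.End K V) (μ : g → g → Module.End K V)
    (hrep : IsLYRep K b t ρ μ) :
    IsLYRep K b t (dualRho K ρ)
      (fun x y => ((μ y x).dualMap : Module.End K (Module.Dual K V))) := by
  obtain ⟨hρ, hμ, R1, R2, R3, R4, R5⟩ := hrep
  refine ⟨isLinearMap_dualRho hρ, isBilin_dualMap_swap hμ, fun x y z => ?_, fun x y z => ?_,
    fun x y z => ?_, fun x y z w => ?_, fun x y z w => ?_⟩ <;>
    simp only [LYD_dualRho, dualRho_eq_dualMap_neg, ← dualMap_mul, ← dualMap_sub,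
      ← dualMap_add]
  · rw [← dualMap_zero, ← R2 z x y]; congr 1; noncomm_ring
  · rw [← dualMap_zero, ← R1 y z x]; congr 1; noncomm_ring
  · rw [R3]; congr 1; noncomm_ring
  · set D := LYD K b ρ μ y z
    calc _ = (-((μ (t y z w) x + μ w (t y z x) - (D * μ w x - μ w x * D))
            + (μ z x * μ w y - μ y x * μ w z - μ w (t y z x) + D * μ w x))).dualMap := by
          congr 1; noncomm_ring
      _ = 0 := by
          rw [sub_eq_zero_of_eq (R5 y z w x), R4 w y z x, add_zero, neg_zero, dualMap_zero]
  · rw [add_comm, R5]; congr 1; noncomm_ring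

/-- the dual representation `(V*; ρ*, −μ*τ)` is a representation. -/
theorem statement4 (K g V : Type*) [Field K] [CharZero K] [AddCommGroup g] [Module K g]
    [AddCommGroup V] [Module K V]
    (b : g → g → g) (t : g → g → g → g) (h : IsLieYamaguti K b t)
    (ρ : g → Module.End K V) (μ : g → g → Module.End K V)
    (hrep : IsLYRep K b t ρ μ) :
    IsLYRep K b t (dualRho K ρ)
      (fun x y => ((μ y x).dualMap : Module.End K (Module.Dual K V))) :=
  statement4_general K g V b t ρ μ hrep
end

section
/- Let (A,*,{·,·,·}) be a pre-Lie-Yamaguti algebra. Then for all x,y,z,w,t in A: (i) {[x,y]_C,z,w}_D+{[y,z]_C,x,w}_D+{[z,x]_C,y,w}_D=0; (ii) {x,y,{z,w,t}_D}_D−{{x,y,z}_D,w,t}_D−{{x,y,z},w,t}_D+{{y,x,z},w,t}_D−{z,{x,y,w}_D,t}_D−{z,{x,y,w},t}_D+{z,{y,x,w},t}_D−{z,w,{x,y,t}_D}_D=0. -/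
/-! With `L x = x * ·`, `R(x,y) = {·,x,y}` and `𝓛(x,y) = {x,y,·}_D` in `End(A)`, one has
`𝓛(x,y) = R(y,x) − R(x,y) − L [x,y]_C + ⁅L x, L y⁆`. Axioms (P1) and (P2) evaluate `R` at a
commutator, while (P4) and (P5) say that `⁅𝓛(x,y), ·⁆` acts on `R` and on `L` through
`∂ = ⟨x,y,·⟩_C`, which is a derivation of `[·,·]_C`. Identity (i) is `Σ_cyc 𝓛([x,y]_C, z) = 0`
and (ii) is `⁅𝓛(x,y), 𝓛(z,w)⁆ = 𝓛(∂z, w) + 𝓛(z, ∂w)`; both then follow by commutator calculus in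
`End(A)`. -/

namespace IsBilin

variable {K M N P : Type*} [Field K] [AddCommGroup M] [Module K M] [AddCommGroup N] [Module K N]
  [AddCommGroup P] [Module K P] {f : M → N → P}

theorem map_add_left (hf : IsBilin K f) (x x' : M) (y : N) : f (x + x') y = f x y + f x' y :=
  (hf.1 y).map_add x x'

theorem map_sub_left (hf : IsBilin K f) (x x' : M) (y : N) : f (x - x') y = f x y - f x' y :=
  (hf.1 y).map_sub x x'

theorem map_add_right (hf : IsBilin K f) (x : M) (y y' : N) : f x (y + y') = f x y + f x y' :=
  (hf.2 x).map_add y y'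

theorem map_sub_right (hf : IsBilin K f) (x : M) (y y' : N) : f x (y - y') = f x y - f x y' :=
  (hf.2 x).map_sub y y'

theorem map_smul_left (hf : IsBilin K f) (c : K) (x : M) (y : N) : f (c • x) y = c • f x y :=
  (hf.1 y).map_smul c x

theorem map_smul_right (hf : IsBilin K f) (c : K) (x : M) (y : N) : f x (c • y) = c • f x y :=
  (hf.2 x).map_smul c y

end IsBilin

namespace IsTrilin

variable {K M P : Type*} [Field K] [AddCommGroup M] [Module K M] [AddCommGroup P] [Module K P]
  {f : M → M → M → P}

theorem map_add₁ (hf : IsTrilin K f) (x x' y z : M) : f (x + x') y z = f x y z + f x' y z :=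
  (hf.1 y z).map_add x x'

theorem map_sub₁ (hf : IsTrilin K f) (x x' y z : M) : f (x - x') y z = f x y z - f x' y z :=
  (hf.1 y z).map_sub x x'

theorem map_smul₁ (hf : IsTrilin K f) (c : K) (x y z : M) : f (c • x) y z = c • f x y z :=
  (hf.1 y z).map_smul c x

theorem map_add₂ (hf : IsTrilin K f) (x y y' z : M) : f x (y + y') z = f x y z + f x y' z :=
  (hf.2.1 x z).map_add y y'

theorem map_sub₂ (hf : IsTrilin K f) (x y y' z : M) : f x (y - y') z = f x y z - f x y' z :=
  (hf.2.1 x z).map_sub y y'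

theorem map_smul₂ (hf : IsTrilin K f) (c : K) (x y z : M) : f x (c • y) z = c • f x y z :=
  (hf.2.1 x z).map_smul c y

theorem map_add₃ (hf : IsTrilin K f) (x y z z' : M) : f x y (z + z') = f x y z + f x y z' :=
  (hf.2.2 x y).map_add z z'

theorem map_sub₃ (hf : IsTrilin K f) (x y z z' : M) : f x y (z - z') = f x y z - f x y z' :=
  (hf.2.2 x y).map_sub z z'

theorem map_smul₃ (hf : IsTrilin K f) (c : K) (x y z : M) : f x y (c • z) = c • f x y z :=
  (hf.2.2 x y).map_smul c z

end IsTrilin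

namespace PreLieYamaguti

variable {K A : Type*} [Field K] [AddCommGroup A] [Module K A]
  {m : A → A → A} {br : A → A → A → A}

theorem isTrilin_preD (hm : IsBilin K m) (hbr : IsTrilin K br) : IsTrilin K (preD m br) := by
  refine ⟨fun y z => ⟨fun x x' => ?_, fun c x => ?_⟩, fun x z => ⟨fun y y' => ?_, fun c y => ?_⟩,
    fun x y => ⟨fun z z' => ?_, fun c z => ?_⟩⟩ <;>
  simp only [preD, preAssoc, hm.map_add_left, hm.map_add_right, hm.map_smul_left,
    hm.map_smul_right, hbr.map_add₁, hbr.map_add₂, hbr.map_add₃, hbr.map_smul₁, hbr.map_smul₂,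
    hbr.map_smul₃, smul_add, smul_sub] <;>
  abel

/-- (LY1) for the subadjacent algebra `(A, [·,·]_C, subT)`: the ternary terms cancel, and
`Σ_cyc [[x,y]_C,z]_C = Σ_cyc ((x,y,z) − (y,x,z))` holds for every bilinear product. -/
theorem preC_preC_add_subT_cyclic (hm : IsBilin K m) (x y z : A) :
    preC m (preC m x y) z + preC m (preC m y z) x + preC m (preC m z x) y
      + (subT m br x y z + subT m br y z x + subT m br z x y) = 0 := by
  simp only [preC, subT, preD, preAssoc, hm.map_sub_left, hm.map_sub_right]
  abel

theorem subT_preC (hm : IsBilin K m) (hbr : IsTrilin K br)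
    (p2 : ∀ x y z w, br x y (preC m z w) = m z (br x y w) - m w (br x y z))
    (p5 : ∀ x y z w, m (preD m br x y z) w + m (br x y z) w - m (br y x z) w
      = preD m br x y (m z w) - m z (preD m br x y w)) (x y z w : A) :
    subT m br x y (preC m z w) = preC m (subT m br x y z) w + preC m z (subT m br x y w) := by
  have h1 := p5 x y z w
  have h2 := p5 x y w z
  have h3 := p2 x y z w
  have h4 := p2 y x z w
  simp only [subT, preC, preD, preAssoc, hm.map_add_left, hm.map_sub_left, hm.map_add_right,
    hm.map_sub_right, hbr.map_sub₁, hbr.map_sub₃] at h1 h2 h3 h4 ⊢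
  linear_combination (norm := abel1) -h1 + h2 + h3 - h4

section Operators

attribute [local instance] LieRing.ofAssociativeRing

variable [CharZero K] (hm : IsBilin K m) (hbr : IsTrilin K br)

local notation "𝐋" => Llin K m hm
local notation "𝐑" => Rlin K br hbr
local notation "𝐃" => Dlin K m br hm hbr

@[simp]
theorem Llin_apply (x v : A) : 𝐋 x v = m x v := rfl

@[simp]
theorem Rlin_apply (x y v : A) : 𝐑 x y v = br v x y := rfl

@[simp]
theorem Dlin_apply (x y v : A) : 𝐃 x y v = preD m br x y v := rfl

theorem Llin_add (x y : A) : 𝐋 (x + y) = 𝐋 x + 𝐋 y :=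
  LinearMap.ext fun v => hm.map_add_left x y v

theorem Llin_sub (x y : A) : 𝐋 (x - y) = 𝐋 x - 𝐋 y :=
  LinearMap.ext fun v => hm.map_sub_left x y v

theorem Dlin_eq (x y : A) : 𝐃 x y = 𝐑 y x - 𝐑 x y - 𝐋 (preC m x y) + ⁅𝐋 x, 𝐋 y⁆ := by
  rw [Dlin, preC, Llin_sub, Ring.lie_def]
  abel

theorem Rlin_preC_left
    (p1 : ∀ x y z w, br z (preC m x y) w - br (m y z) x w + br (m x z) y w = 0) (x y w : A) :
    𝐑 (preC m x y) w = 𝐑 x w * 𝐋 y - 𝐑 y w * 𝐋 x :=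
  LinearMap.ext fun z => sub_eq_zero.1 <| by simpa [sub_add] using p1 x y z w

theorem Rlin_preC_right (p2 : ∀ x y z w, br x y (preC m z w) = m z (br x y w) - m w (br x y z))
    (y z w : A) : 𝐑 y (preC m z w) = 𝐋 z * 𝐑 y w - 𝐋 w * 𝐑 y z :=
  LinearMap.ext fun x => p2 x y z w

theorem Llin_zero : 𝐋 0 = 0 := by
  simpa using Llin_sub hm 0 0

theorem Llin_subT
    (p5 : ∀ x y z w, m (preD m br x y z) w + m (br x y z) w - m (br y x z) w
      = preD m br x y (m z w) - m z (preD m br x y w)) (x y z : A) :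
    𝐋 (subT m br x y z) = ⁅𝐃 x y, 𝐋 z⁆ :=
  LinearMap.ext fun w => by
    simpa [Ring.lie_def, subT, hm.map_add_left, hm.map_sub_left] using p5 x y z w

theorem lie_Dlin_Rlin
    (p4 : ∀ x y z w t, br z (preD m br x y w) t + br z (br x y w) t - br z (br y x w) t
      + br z w (preD m br x y t) + br z w (br x y t) - br z w (br y x t)
      = preD m br x y (br z w t) - br (preD m br x y z) w t) (x y w t : A) :
    ⁅𝐃 x y, 𝐑 w t⁆ = 𝐑 (subT m br x y w) t + 𝐑 w (subT m br x y t) :=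
  LinearMap.ext fun z => by
    simp only [Ring.lie_def, LinearMap.sub_apply, LinearMap.add_apply, Module.End.mul_apply,
      Rlin_apply, Dlin_apply, subT, hbr.map_add₂, hbr.map_sub₂, hbr.map_add₃, hbr.map_sub₃]
    rw [← p4 x y z w t]
    abel

theorem Dlin_preC_cyclic (h : IsPreLY K m br) (x y z : A) :
    𝐃 (preC m x y) z + 𝐃 (preC m y z) x + 𝐃 (preC m z x) y = 0 := by
  obtain ⟨-, -, p1, p2, -, -, p5⟩ := h
  -- `L` of the subadjacent (LY1), rewritten by (P5), cancels the `L` and `⁅L, L⁆` terms of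
  -- `Dlin_eq` up to the Jacobi identity in `End(A)`.
  have hL := congrArg 𝐋 (preC_preC_add_subT_cyclic hm (br := br) x y z)
  simp only [Llin_add hm, Llin_zero hm, Llin_subT hm hbr p5] at hL
  calc _ = 𝐃 (preC m x y) z + 𝐃 (preC m y z) x + 𝐃 (preC m z x) y
        + (𝐋 (preC m (preC m x y) z) + 𝐋 (preC m (preC m y z) x) + 𝐋 (preC m (preC m z x) y)
          + (⁅𝐃 x y, 𝐋 z⁆ + ⁅𝐃 y z, 𝐋 x⁆ + ⁅𝐃 z x, 𝐋 y⁆)) := by rw [hL, add_zero]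
    _ = 0 := by
      simp only [Dlin_eq hm hbr, Rlin_preC_left hm hbr p1, Rlin_preC_right hm hbr p2,
        Ring.lie_def]
      noncomm_ring

theorem lie_Dlin_Dlin (h : IsPreLY K m br) (x y z w : A) :
    ⁅𝐃 x y, 𝐃 z w⁆ = 𝐃 (subT m br x y z) w + 𝐃 z (subT m br x y w) := by
  obtain ⟨-, -, -, p2, -, p4, p5⟩ := h
  rw [Dlin_eq hm hbr z w, Dlin_eq hm hbr (subT m br x y z) w, Dlin_eq hm hbr z (subT m br x y w),
    lie_add, lie_sub, lie_sub, leibniz_lie, lie_Dlin_Rlin hm hbr p4, lie_Dlin_Rlin hm hbr p4,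
    ← Llin_subT hm hbr p5, ← Llin_subT hm hbr p5, ← Llin_subT hm hbr p5,
    subT_preC hm hbr p2 p5, Llin_add]
  abel

end Operators

end PreLieYamaguti

/-- identities (3.9) and (3.10) in a pre-Lie-Yamaguti algebra. -/
theorem statement7 (K A : Type*) [Field K] [CharZero K] [AddCommGroup A] [Module K A]
    (m : A → A → A) (br : A → A → A → A) (h : IsPreLY K m br) :
    (∀ x y z w,
        preD m br (preC m x y) z w + preD m br (preC m y z) x w
          + preD m br (preC m z x) y w = 0) ∧
    (∀ x y z w t,
        preD m br x y (preD m br z w t) - preD m br (preD m br x y z) w t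
          - preD m br (br x y z) w t + preD m br (br y x z) w t
          - preD m br z (preD m br x y w) t - preD m br z (br x y w) t
          + preD m br z (br y x w) t - preD m br z w (preD m br x y t) = 0) := by
  obtain ⟨hm, hbr, -⟩ := id h
  refine ⟨fun x y z w => ?_, fun x y z w t => ?_⟩
  · simpa using LinearMap.congr_fun (PreLieYamaguti.Dlin_preC_cyclic hm hbr h x y z) w
  · have key := LinearMap.congr_fun (PreLieYamaguti.lie_Dlin_Dlin hm hbr h x y z w) t
    have hD := PreLieYamaguti.isTrilin_preD hm hbr
    simp only [Ring.lie_def, LinearMap.sub_apply, LinearMap.add_apply, Module.End.mul_apply,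
      PreLieYamaguti.Dlin_apply, subT, hD.map_add₁, hD.map_sub₁, hD.map_add₂, hD.map_sub₂] at key
    rw [← sub_eq_zero.2 key]
    abel
end

section
/- Let (A,*,{·,·,·}) be a pre-Lie-Yamaguti algebra. Then the brackets [x,y]_C := x*y−y*x and ⟨x,y,z⟩_C := {x,y,z}_D+{x,y,z}−{y,x,z} define a Lie-Yamaguti algebra structure on A (the subadjacent Lie-Yamaguti algebra A^c). -/
section Multilinear

variable {K M N P : Type*} [Field K] [AddCommGroup M] [Module K M]
  [AddCommGroup N] [Module K N] [AddCommGroup P] [Module K P]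

theorem IsBilin.exists_eq_linearMap {f : M → N → P} (hf : IsBilin K f) :
    ∃ F : M →ₗ[K] N →ₗ[K] P, f = fun x y => F x y :=
  ⟨LinearMap.mk₂ K f (fun x x' y => (hf.1 y).map_add x x') (fun c x y => (hf.1 y).map_smul c x)
    (fun x => (hf.2 x).map_add) (fun c x y => (hf.2 x).map_smul c y), rfl⟩

theorem IsTrilin.exists_eq_linearMap {f : M → M → M → P} (hf : IsTrilin K f) :
    ∃ F : M →ₗ[K] M →ₗ[K] M →ₗ[K] P, f = fun x y z => F x y z :=
  ⟨LinearMap.mk₂ K (fun x y => IsLinearMap.mk' (f x y) (hf.2.2 x y))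
    (fun x x' y => LinearMap.ext fun z => (hf.1 y z).map_add x x')
    (fun c x y => LinearMap.ext fun z => (hf.1 y z).map_smul c x)
    (fun x y y' => LinearMap.ext fun z => (hf.2.1 x z).map_add y y')
    (fun c x y => LinearMap.ext fun z => (hf.2.1 x z).map_smul c y), rfl⟩

end Multilinear

section Subadjacent

variable {K A : Type*} [Field K] [AddCommGroup A] [Module K A]

theorem preC_anticomm (m : A → A → A) (x y : A) : preC m x y = -preC m y x := by
  simp only [preC, neg_sub]

theorem subT_anticomm (m : A → A → A) (br : A → A → A → A) (x y z : A) :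
    subT m br x y z = -subT m br y x z := by
  simp only [subT, preD]; abel

theorem IsBilin.isBilin_preC {m : A → A → A} (hm : IsBilin K m) : IsBilin K (preC m) := by
  obtain ⟨M, rfl⟩ := hm.exists_eq_linearMap
  refine ⟨fun y => ⟨fun a b => ?_, fun c a => ?_⟩, fun x => ⟨fun a b => ?_, fun c a => ?_⟩⟩ <;>
  simp only [preC, map_add, map_smul, LinearMap.add_apply, LinearMap.smul_apply] <;> module

theorem IsBilin.isTrilin_subT {m : A → A → A} {br : A → A → A → A} (hm : IsBilin K m)
    (hbr : IsTrilin K br) : IsTrilin K (subT m br) := by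
  obtain ⟨M, rfl⟩ := hm.exists_eq_linearMap
  obtain ⟨B, rfl⟩ := hbr.exists_eq_linearMap
  refine ⟨fun y z => ⟨fun a b => ?_, fun c a => ?_⟩, fun x z => ⟨fun a b => ?_, fun c a => ?_⟩,
    fun x y => ⟨fun a b => ?_, fun c a => ?_⟩⟩ <;>
  simp only [subT, preD, preAssoc, map_add, map_smul, LinearMap.add_apply,
    LinearMap.smul_apply] <;> module

theorem preC_preC_add_subT_cyclic {m : A → A → A} (hm : IsBilin K m)
    (br : A → A → A → A) (x y z : A) :
    preC m (preC m x y) z + preC m (preC m y z) x + preC m (preC m z x) y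
      + subT m br x y z + subT m br y z x + subT m br z x y = 0 := by
  obtain ⟨M, rfl⟩ := hm.exists_eq_linearMap
  simp only [preC, subT, preD, preAssoc, map_sub, LinearMap.sub_apply]
  abel

end Subadjacent

namespace IsPreLY

variable {K A : Type*} [Field K] [CharZero K] [AddCommGroup A] [Module K A]
  {m : A → A → A} {br : A → A → A → A}

theorem subT_preC_cyclic (h : IsPreLY K m br) (x y z w : A) :
    subT m br (preC m x y) z w + subT m br (preC m y z) x w + subT m br (preC m z x) y w = 0 := by
  obtain ⟨hm, hbr, p1, p2, -, -, p5⟩ := h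
  obtain ⟨M, rfl⟩ := hm.exists_eq_linearMap
  obtain ⟨B, rfl⟩ := hbr.exists_eq_linearMap
  simp only [subT, preD, preAssoc, preC, map_sub, LinearMap.sub_apply, map_add,
    LinearMap.add_apply] at p1 p2 p5 ⊢
  linear_combination (norm := abel) -p1 x y z w - p1 x y w z + p1 x z y w + p1 x z w y
    - p1 y z x w - p1 y z w x + p2 w x y z - p2 w y x z + p2 w z x y + p5 x y z w
    - p5 x z y w + p5 y z x w

theorem preD_mul (h : IsPreLY K m br) (x y z w : A) :
    preD m br x y (m z w) = m (subT m br x y z) w + m z (preD m br x y w) := by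
  obtain ⟨hm, -, -, -, -, -, p5⟩ := h
  rw [subT, (hm.1 w).map_sub, (hm.1 w).map_add]
  linear_combination (norm := abel) -p5 x y z w

theorem subT_preC (h : IsPreLY K m br) (x y z w : A) :
    subT m br x y (preC m z w) = preC m (subT m br x y z) w + preC m z (subT m br x y w) := by
  have hzw := h.preD_mul x y z w
  have hwz := h.preD_mul x y w z
  obtain ⟨hm, hbr, -, p2, -, -, -⟩ := h
  obtain ⟨M, rfl⟩ := hm.exists_eq_linearMap
  obtain ⟨B, rfl⟩ := hbr.exists_eq_linearMap
  simp only [subT, preD, preAssoc, preC, map_sub, LinearMap.sub_apply, map_add,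
    LinearMap.add_apply] at p2 hzw hwz ⊢
  linear_combination (norm := abel) hzw - hwz + p2 x y z w - p2 y x z w

theorem br_subT (h : IsPreLY K m br) (x y z w t : A) :
    br x y (subT m br z w t) = br (br x y z) w t - br (br x y w) z t + preD m br z w (br x y t) := by
  obtain ⟨-, hbr, -, -, p3, -, -⟩ := h
  rw [subT, (hbr.2.2 x y).map_sub, (hbr.2.2 x y).map_add]
  linear_combination (norm := abel) -p3 x y z w t

theorem preD_br (h : IsPreLY K m br) (x y z w t : A) :
    preD m br x y (br z w t) =
      br (preD m br x y z) w t + br z (subT m br x y w) t + br z w (subT m br x y t) := by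
  obtain ⟨-, hbr, -, -, -, p4, -⟩ := h
  rw [subT, subT, (hbr.2.1 z t).map_sub, (hbr.2.1 z t).map_add, (hbr.2.2 z w).map_sub,
    (hbr.2.2 z w).map_add]
  linear_combination (norm := abel) -p4 x y z w t

theorem subT_subT (h : IsPreLY K m br) (x y z w u : A) :
    subT m br x y (subT m br z w u) =
      subT m br (subT m br x y z) w u + subT m br z (subT m br x y w) u
        + subT m br z w (subT m br x y u) := by
  have hτ := h.br_subT x y z w u
  have hτ' := h.br_subT y x z w u
  have hzwu := h.preD_br x y z w u
  have hwzu := h.preD_br x y w z u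
  have huwz := h.preD_br x y u w z
  have huzw := h.preD_br x y u z w
  have hwz_u := h.preD_mul x y (m w z) u
  have hzw_u := h.preD_mul x y (m z w) u
  have hw_zu := h.preD_mul x y w (m z u)
  have hz_wu := h.preD_mul x y z (m w u)
  have hzu := congrArg (m w) (h.preD_mul x y z u)
  have hwu := congrArg (m z) (h.preD_mul x y w u)
  -- the associator terms of `θ(z,w)u` leave `θ(x,y)(w*z - z*w)*u`, a case of (LY3)
  have hcomm := congrArg (m · u) (h.subT_preC x y w z)
  obtain ⟨hm, hbr, -⟩ := h
  obtain ⟨M, rfl⟩ := hm.exists_eq_linearMap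
  obtain ⟨B, rfl⟩ := hbr.exists_eq_linearMap
  simp only [subT, preD, preAssoc, preC, map_sub, LinearMap.sub_apply, map_add,
    LinearMap.add_apply] at hτ hτ' hzwu hwzu huwz huzw hwz_u hzw_u hw_zu hz_wu hzu hwu hcomm ⊢
  linear_combination (norm := abel) hτ - hτ' + hzwu - hwzu + huwz - huzw + hwz_u - hw_zu
    - hzw_u + hz_wu - hzu + hwu + hcomm

end IsPreLY

/-- the subadjacent brackets of a pre-Lie-Yamaguti algebra form a
Lie-Yamaguti algebra. -/
theorem statement8 (K A : Type*) [Field K] [CharZero K] [AddCommGroup A] [Module K A]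
    (m : A → A → A) (br : A → A → A → A) (h : IsPreLY K m br) :
    IsLieYamaguti K (preC m) (subT m br) :=
  ⟨h.1.isBilin_preC, h.1.isTrilin_subT h.2.1, preC_anticomm m, subT_anticomm m br,
    preC_preC_add_subT_cyclic h.1 br, h.subT_preC_cyclic, h.subT_preC, h.subT_subT⟩
end

section
/- Let (A,*,{·,·,·}) be a pre-Lie-Yamaguti algebra, and define L: A→End(A) by L_x z = x*z and 𝓡: A×A→End(A) by 𝓡(x,y)z = {z,x,y}. Then (A;L,𝓡) is a representation of the subadjacent Lie-Yamaguti algebra A^c on A, and the identity map Id: A→A is a relative Rota-Baxter operator on A^c with respect to the representation (A;L,𝓡). -/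
/-!
Every axiom of a representation of `A^c` on `(A; L, 𝓡)`, evaluated at a vector, is one of
the axioms (P1)–(P5) once one observes that the operator `D(x,y)` of this representation acts
by `z ↦ {x,y,z}_D`. The Rota-Baxter identities for `Id` are then the defining formulas of the
brackets `[·,·]_C` and `⟨·,·,·⟩_C`.
-/

section Multilinear

variable {K M N P : Type*} [Field K] [AddCommGroup M] [Module K M]
  [AddCommGroup N] [Module K N] [AddCommGroup P] [Module K P]

theorem IsBilin.map_add_left_s9 {f : M → N → P} (hf : IsBilin K f) (x x' : M) (y : N) :
    f (x + x') y = f x y + f x' y :=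
  (hf.1 y).map_add x x'

theorem IsBilin.map_sub_left_s9 {f : M → N → P} (hf : IsBilin K f) (x x' : M) (y : N) :
    f (x - x') y = f x y - f x' y :=
  (hf.1 y).map_sub x x'

theorem IsTrilin.map_add_mid {f : M → M → M → P} (hf : IsTrilin K f) (x y y' z : M) :
    f x (y + y') z = f x y z + f x y' z :=
  (hf.2.1 x z).map_add y y'

theorem IsTrilin.map_sub_mid {f : M → M → M → P} (hf : IsTrilin K f) (x y y' z : M) :
    f x (y - y') z = f x y z - f x y' z :=
  (hf.2.1 x z).map_sub y y'

theorem IsTrilin.map_add_right {f : M → M → M → P} (hf : IsTrilin K f) (x y z z' : M) :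
    f x y (z + z') = f x y z + f x y z' :=
  (hf.2.2 x y).map_add z z'

theorem IsTrilin.map_sub_right {f : M → M → M → P} (hf : IsTrilin K f) (x y z z' : M) :
    f x y (z - z') = f x y z - f x y z' :=
  (hf.2.2 x y).map_sub z z'

end Multilinear

section PreLieYamaguti

variable {K A : Type*} [Field K] [CharZero K] [AddCommGroup A] [Module K A]
  {m : A → A → A} {br : A → A → A → A}

@[simp]
theorem Llin_apply (hm : IsBilin K m) (x v : A) : Llin K m hm x v = m x v := rfl

@[simp]
theorem Rlin_apply (hbr : IsTrilin K br) (x y v : A) : Rlin K br hbr x y v = br v x y := rfl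

theorem isLinearMap_Llin (hm : IsBilin K m) : IsLinearMap K (Llin K m hm) where
  map_add x x' := LinearMap.ext fun v => (hm.1 v).map_add x x'
  map_smul c x := LinearMap.ext fun v => (hm.1 v).map_smul c x

theorem isBilin_Rlin (hbr : IsTrilin K br) : IsBilin K (Rlin K br hbr) :=
  ⟨fun y => ⟨fun x x' => LinearMap.ext fun v => (hbr.2.1 v y).map_add x x',
      fun c x => LinearMap.ext fun v => (hbr.2.1 v y).map_smul c x⟩,
    fun x => ⟨fun y y' => LinearMap.ext fun v => (hbr.2.2 v x).map_add y y',
      fun c y => LinearMap.ext fun v => (hbr.2.2 v x).map_smul c y⟩⟩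

theorem LYD_Llin_Rlin_apply (hm : IsBilin K m) (hbr : IsTrilin K br) (x y z : A) :
    LYD K (preC m) (Llin K m hm) (Rlin K br hbr) x y z = preD m br x y z := by
  simp only [LYD, LinearMap.sub_apply, LinearMap.add_apply, Module.End.mul_apply, Llin_apply,
    Rlin_apply, preD, preC, preAssoc, hm.map_sub_left_s9]
  abel

theorem isLYRep_Llin_Rlin (hm : IsBilin K m) (hbr : IsTrilin K br) (h : IsPreLY K m br) :
    IsLYRep K (preC m) (subT m br) (Llin K m hm) (Rlin K br hbr) := by
  obtain ⟨-, -, P1, P2, P3, P4, P5⟩ := h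
  refine ⟨isLinearMap_Llin hm, isBilin_Rlin hbr, ?R1, ?R2, ?R3, ?R4, ?R5⟩
  case R1 =>
    intro x y z; ext w
    simpa only [LinearMap.add_apply, LinearMap.sub_apply, Module.End.mul_apply,
      LinearMap.zero_apply, Llin_apply, Rlin_apply] using P1 x y w z
  case R2 =>
    intro x y z; ext w
    simp only [LinearMap.add_apply, LinearMap.sub_apply, Module.End.mul_apply,
      LinearMap.zero_apply, Llin_apply, Rlin_apply, P2]
    abel
  case R3 =>
    intro x y z; ext w
    simp only [LinearMap.sub_apply, Module.End.mul_apply, Llin_apply, LYD_Llin_Rlin_apply,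
      subT, hm.map_sub_left_s9, hm.map_add_left_s9]
    exact P5 x y z w
  case R4 =>
    intro x y z w; ext v
    simp only [LinearMap.add_apply, LinearMap.sub_apply, Module.End.mul_apply,
      LinearMap.zero_apply, Rlin_apply, LYD_Llin_Rlin_apply, subT, hbr.map_add_right,
      hbr.map_sub_right]
    rw [← P3 v x y z w]
    abel
  case R5 =>
    intro x y z w; ext v
    simp only [LinearMap.add_apply, LinearMap.sub_apply, Module.End.mul_apply, Rlin_apply,
      LYD_Llin_Rlin_apply, subT, hbr.map_add_mid, hbr.map_sub_mid, hbr.map_add_right,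
      hbr.map_sub_right]
    rw [← sub_eq_zero, ← sub_eq_zero.mpr (P4 x y v z w)]
    abel

theorem isRelRB_id (hm : IsBilin K m) (hbr : IsTrilin K br) :
    IsRelRB K (preC m) (subT m br) (Llin K m hm) (Rlin K br hbr) id :=
  ⟨LinearMap.id.isLinear, fun _ _ => rfl, fun _ _ _ => by simp [LYD_Llin_Rlin_apply, subT]⟩

end PreLieYamaguti

/-- `(A; L, 𝓡)` is a representation of the subadjacent Lie-Yamaguti algebra,
and the identity map is a relative Rota-Baxter operator with respect to it. -/
theorem statement9 (K A : Type*) [Field K] [CharZero K] [AddCommGroup A] [Module K A]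
    (m : A → A → A) (br : A → A → A → A)
    (hm : IsBilin K m) (hbr : IsTrilin K br) (h : IsPreLY K m br) :
    IsLYRep K (preC m) (subT m br) (Llin K m hm) (Rlin K br hbr) ∧
    IsRelRB K (preC m) (subT m br) (Llin K m hm) (Rlin K br hbr) (id : A → A) :=
  ⟨isLYRep_Llin_Rlin hm hbr h, isRelRB_id hm hbr⟩
end

section
/- Let T: V→g be a relative Rota-Baxter operator on a Lie-Yamaguti algebra (g,[·,·],⟨·,·,·⟩) with respect to a representation (V;ρ,μ). Define u*v := ρ(Tu)v and {u,v,w} := μ(Tv,Tw)u for all u,v,w in V. Then (V,*,{·,·,·}) is a pre-Lie-Yamaguti algebra. -/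
/-!
Two identities reduce everything to the representation axioms: `T (u * v - v * u) = [Tu, Tv]`,
which is the first Rota-Baxter identity, and `{u,v,w}_D = D(Tu, Tv) w`, a direct expansion using it.
By the second Rota-Baxter identity they give `T ⟨u,v,w⟩_C = ⟨Tu, Tv, Tw⟩`, and then
(P1), (P2), (P3), (P4), (P5) are (R1), (R2), (R4), (R5), (R3) at `Tx, Ty, …`, applied to a vector.
-/

theorem IsLinearMap.apply_comp {R M N P : Type*} [CommSemiring R] [AddCommMonoid M] [Module R M]
    [AddCommMonoid N] [Module R N] [AddCommMonoid P] [Module R P]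
    {F : N → Module.End R P} {T : M → N} (hF : IsLinearMap R F) (hT : IsLinearMap R T) (y : P) :
    IsLinearMap R fun x => F (T x) y :=
  ⟨fun a c => by simp only [hT.map_add, hF.map_add, LinearMap.add_apply],
    fun k a => by simp only [hT.map_smul, hF.map_smul, LinearMap.smul_apply]⟩

section RotaBaxter

variable {K g V : Type*} [Field K] [AddCommGroup g] [Module K g] [AddCommGroup V] [Module K V]
  {ρ : g → Module.End K V} {μ : g → g → Module.End K V} {T : V → g}

def rotaBaxterMul (ρ : g → Module.End K V) (T : V → g) (u v : V) : V := ρ (T u) v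

def rotaBaxterBracket (μ : g → g → Module.End K V) (T : V → g) (u v w : V) : V :=
  μ (T v) (T w) u

theorem isBilin_rotaBaxterMul (hρ : IsLinearMap K ρ) (hT : IsLinearMap K T) :
    IsBilin K (rotaBaxterMul ρ T) :=
  ⟨hρ.apply_comp hT, fun x => (ρ (T x)).isLinear⟩

theorem isTrilin_rotaBaxterBracket (hμ : IsBilin K μ) (hT : IsLinearMap K T) :
    IsTrilin K (rotaBaxterBracket μ T) :=
  ⟨fun y z => (μ (T y) (T z)).isLinear, fun x z => (hμ.1 (T z)).apply_comp hT x,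
    fun x y => (hμ.2 (T y)).apply_comp hT x⟩

end RotaBaxter

namespace IsRelRB

variable {K g V : Type*} [Field K] [CharZero K] [AddCommGroup g] [Module K g]
  [AddCommGroup V] [Module K V] {b : g → g → g} {t : g → g → g → g}
  {ρ : g → Module.End K V} {μ : g → g → Module.End K V} {T : V → g}

local infixl:70 " ⋆ " => rotaBaxterMul ρ T

local notation "⦃" x ", " y ", " z "⦄" => rotaBaxterBracket μ T x y z

local notation "⦃" x ", " y ", " z "⦄ᴰ" => preD (rotaBaxterMul ρ T) (rotaBaxterBracket μ T) x y z

theorem map_preC (hT : IsRelRB K b t ρ μ T) (u v : V) :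
    T (preC (rotaBaxterMul ρ T) u v) = b (T u) (T v) :=
  (hT.2.1 u v).symm

theorem preD_eq_LYD (hρ : IsLinearMap K ρ) (hT : IsRelRB K b t ρ μ T) (u v w : V) :
    ⦃u, v, w⦄ᴰ = LYD K b ρ μ (T u) (T v) w := by
  have hvu : T (ρ (T v) u) = T (ρ (T u) v) - b (T u) (T v) := by
    rw [hT.2.1, ← hT.1.map_sub, sub_sub_cancel]
  simp only [preD, preAssoc, rotaBaxterMul, rotaBaxterBracket, LYD, hvu, hρ.map_sub,
    LinearMap.sub_apply, LinearMap.add_apply, Module.End.mul_apply]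
  abel

theorem map_subT (hρ : IsLinearMap K ρ) (hT : IsRelRB K b t ρ μ T) (u v w : V) :
    T (subT (rotaBaxterMul ρ T) (rotaBaxterBracket μ T) u v w) = t (T u) (T v) (T w) := by
  rw [hT.2.2, subT, preD_eq_LYD hρ hT]
  rfl

theorem bracket_preC_mid (hrep : IsLYRep K b t ρ μ) (hT : IsRelRB K b t ρ μ T) (x y z w : V) :
    ⦃z, preC (rotaBaxterMul ρ T) x y, w⦄ - ⦃y ⋆ z, x, w⦄ + ⦃x ⋆ z, y, w⦄ = 0 := by
  obtain ⟨-, -, hR1, -⟩ := hrep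
  simpa [rotaBaxterBracket, rotaBaxterMul, hT.map_preC]
    using LinearMap.congr_fun (hR1 (T x) (T y) (T w)) z

theorem bracket_preC_right (hrep : IsLYRep K b t ρ μ) (hT : IsRelRB K b t ρ μ T) (x y z w : V) :
    ⦃x, y, preC (rotaBaxterMul ρ T) z w⦄ = z ⋆ ⦃x, y, w⦄ - w ⋆ ⦃x, y, z⦄ := by
  obtain ⟨-, -, -, hR2, -⟩ := hrep
  have h := LinearMap.congr_fun (hR2 (T y) (T z) (T w)) x
  simp only [LinearMap.sub_apply, LinearMap.add_apply, Module.End.mul_apply,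
    LinearMap.zero_apply] at h
  simp only [rotaBaxterBracket, rotaBaxterMul, hT.map_preC]
  linear_combination (norm := abel) h

theorem bracket_bracket_left (hrep : IsLYRep K b t ρ μ) (hT : IsRelRB K b t ρ μ T)
    (x y z w r : V) :
    ⦃⦃x, y, z⦄, w, r⦄ - ⦃⦃x, y, w⦄, z, r⦄ - ⦃x, y, ⦃z, w, r⦄ᴰ⦄ - ⦃x, y, ⦃z, w, r⦄⦄
      + ⦃x, y, ⦃w, z, r⦄⦄ + ⦃z, w, ⦃x, y, r⦄⦄ᴰ = 0 := by
  obtain ⟨hρ, hμ, -, -, -, hR4, -⟩ := hrep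
  have h := LinearMap.congr_fun (hR4 (T y) (T z) (T w) (T r)) x
  rw [← hT.map_subT hρ, subT, hT.1.map_sub, hT.1.map_add, (hμ.2 _).map_sub,
    (hμ.2 _).map_add] at h
  simp only [LinearMap.sub_apply, LinearMap.add_apply, Module.End.mul_apply,
    LinearMap.zero_apply] at h
  simp only [rotaBaxterBracket, hT.preD_eq_LYD hρ] at h ⊢
  linear_combination (norm := abel) h

theorem preD_bracket (hrep : IsLYRep K b t ρ μ) (hT : IsRelRB K b t ρ μ T) (x y z w r : V) :
    ⦃z, ⦃x, y, w⦄ᴰ, r⦄ + ⦃z, ⦃x, y, w⦄, r⦄ - ⦃z, ⦃y, x, w⦄, r⦄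
      + ⦃z, w, ⦃x, y, r⦄ᴰ⦄ + ⦃z, w, ⦃x, y, r⦄⦄ - ⦃z, w, ⦃y, x, r⦄⦄
      = ⦃x, y, ⦃z, w, r⦄⦄ᴰ - ⦃⦃x, y, z⦄ᴰ, w, r⦄ := by
  obtain ⟨hρ, hμ, -, -, -, -, hR5⟩ := hrep
  have h := LinearMap.congr_fun (hR5 (T x) (T y) (T w) (T r)) z
  rw [← hT.map_subT hρ x y w, ← hT.map_subT hρ x y r, subT, subT, hT.1.map_sub,
    hT.1.map_add, hT.1.map_sub, hT.1.map_add, (hμ.1 _).map_sub, (hμ.1 _).map_add,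
    (hμ.2 _).map_sub, (hμ.2 _).map_add] at h
  simp only [LinearMap.sub_apply, LinearMap.add_apply, Module.End.mul_apply] at h
  simp only [rotaBaxterBracket, hT.preD_eq_LYD hρ] at h ⊢
  linear_combination (norm := abel) h

theorem preD_mul (hrep : IsLYRep K b t ρ μ) (hT : IsRelRB K b t ρ μ T) (x y z w : V) :
    ⦃x, y, z⦄ᴰ ⋆ w + ⦃x, y, z⦄ ⋆ w - ⦃y, x, z⦄ ⋆ w = ⦃x, y, z ⋆ w⦄ᴰ - z ⋆ ⦃x, y, w⦄ᴰ := by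
  obtain ⟨hρ, -, -, -, hR3, -⟩ := hrep
  have h := LinearMap.congr_fun (hR3 (T x) (T y) (T z)) w
  rw [← hT.map_subT hρ, subT, hT.1.map_sub, hT.1.map_add, hρ.map_sub, hρ.map_add] at h
  simp only [LinearMap.sub_apply, LinearMap.add_apply, Module.End.mul_apply] at h
  simp only [rotaBaxterMul, hT.preD_eq_LYD hρ] at h ⊢
  linear_combination (norm := abel) h

end IsRelRB

theorem statement10_general (K g V : Type*) [Field K] [CharZero K] [AddCommGroup g] [Module K g]
    [AddCommGroup V] [Module K V]
    (b : g → g → g) (t : g → g → g → g)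
    (ρ : g → Module.End K V) (μ : g → g → Module.End K V)
    (hrep : IsLYRep K b t ρ μ) (T : V → g) (hT : IsRelRB K b t ρ μ T) :
    IsPreLY K (fun u v => ρ (T u) v) (fun u v w => μ (T v) (T w) u) :=
  ⟨isBilin_rotaBaxterMul hrep.1 hT.1, isTrilin_rotaBaxterBracket hrep.2.1 hT.1,
    hT.bracket_preC_mid hrep, hT.bracket_preC_right hrep, hT.bracket_bracket_left hrep,
    hT.preD_bracket hrep, hT.preD_mul hrep⟩

/-- a relative Rota-Baxter operator induces a pre-Lie-Yamaguti algebra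
structure on `V`. -/
theorem statement10 (K g V : Type*) [Field K] [CharZero K] [AddCommGroup g] [Module K g]
    [AddCommGroup V] [Module K V]
    (b : g → g → g) (t : g → g → g → g) (h : IsLieYamaguti K b t)
    (ρ : g → Module.End K V) (μ : g → g → Module.End K V)
    (hrep : IsLYRep K b t ρ μ) (T : V → g) (hT : IsRelRB K b t ρ μ T) :
    IsPreLY K (fun u v => ρ (T u) v) (fun u v w => μ (T v) (T w) u) :=
  statement10_general K g V b t ρ μ hrep T hT
end

section
/- Let T: V→g be a relative Rota-Baxter operator on a Lie-Yamaguti algebra (g,[·,·],⟨·,·,·⟩) with respect to a representation (V;ρ,μ), and let D(x,y):=μ(y,x)−μ(x,y)+ρ(x)ρ(y)−ρ(y)ρ(x)−ρ([x,y]). Define on V the brackets [u,v]_C := ρ(Tu)v−ρ(Tv)u and ⟨u,v,w⟩_C := D(Tu,Tv)w+μ(Tv,Tw)u−μ(Tu,Tw)v. Then (V,[·,·]_C,⟨·,·,·⟩_C) is a Lie-Yamaguti algebra and T is a homomorphism of Lie-Yamaguti algebras from (V,[·,·]_C,⟨·,·,·⟩_C) to (g,[·,·],⟨·,·,·⟩),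 i.e., T([u,v]_C)=[Tu,Tv] and T(⟨u,v,w⟩_C)=⟨Tu,Tv,Tw⟩ for all u,v,w in V. -/
section Representation

variable {K g V : Type*} [Field K] [CharZero K] [AddCommGroup g] [Module K g]
  [AddCommGroup V] [Module K V] {b : g → g → g} {t : g → g → g → g}
  {ρ : g → Module.End K V} {μ : g → g → Module.End K V}

theorem LYD_swap (hρ : IsLinearMap K ρ) (hb : ∀ x y, b x y = -b y x) (x y : g) :
    LYD K b ρ μ x y = -LYD K b ρ μ y x := by
  simp only [LYD, hb x y, hρ.map_neg]
  abel

theorem isBilin_LYD (hb : IsBilin K b) (hρ : IsLinearMap K ρ) (hμ : IsBilin K μ) :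
    IsBilin K (LYD K b ρ μ) := by
  refine ⟨fun y => ⟨fun x x' => ?_, fun c x => ?_⟩, fun x => ⟨fun y y' => ?_, fun c y => ?_⟩⟩ <;>
    simp only [LYD, hb.map_add_left, hb.map_add_right, hb.map_smul_left, hb.map_smul_right,
      hμ.map_add_left, hμ.map_add_right, hμ.map_smul_left, hμ.map_smul_right, hρ.map_add,
      hρ.map_smul, add_mul, mul_add, smul_mul_assoc, mul_smul_comm] <;>
    module

theorem IsLYRep.LYD_bracket_cyclic (hrep : IsLYRep K b t ρ μ) (h : IsLieYamaguti K b t)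
    (x y z : g) :
    LYD K b ρ μ (b x y) z + LYD K b ρ μ (b y z) x + LYD K b ρ μ (b z x) y = 0 := by
  obtain ⟨hρ, -, hR1, hR2, hR3, -, -⟩ := hrep
  obtain ⟨-, -, -, -, hLY1, -⟩ := h
  have hρLY1 : ρ (b (b x y) z) + ρ (b (b y z) x) + ρ (b (b z x) y)
      + ρ (t x y z) + ρ (t y z x) + ρ (t z x y) = 0 := by
    simpa only [hρ.map_add, hρ.map_zero] using congrArg ρ (hLY1 x y z)
  simp only [LYD] at hR3 ⊢
  linear_combination (norm := noncomm_ring) -hρLY1 - hR1 x y z - hR1 y z x - hR1 z x y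
    + hR2 z x y + hR2 x y z + hR2 y z x + hR3 x y z + hR3 y z x + hR3 z x y

theorem IsLYRep.LYD_commutator (hrep : IsLYRep K b t ρ μ) (h : IsLieYamaguti K b t)
    (x y z w : g) :
    LYD K b ρ μ x y * LYD K b ρ μ z w - LYD K b ρ μ z w * LYD K b ρ μ x y
      = LYD K b ρ μ (t x y z) w + LYD K b ρ μ z (t x y w) := by
  obtain ⟨hρ, -, -, -, hR3, -, hR5⟩ := hrep
  obtain ⟨-, -, -, -, -, -, hLY3, -⟩ := h
  have hρLY3 : ρ (t x y (b z w)) = ρ (b (t x y z) w) + ρ (b z (t x y w)) := by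
    rw [hLY3, hρ.map_add]
  simp only [LYD] at hR3 hR5 ⊢
  linear_combination (norm := noncomm_ring) hR5 x y z w - hR5 x y w z - hR3 x y z * ρ w
    + ρ w * hR3 x y z - ρ z * hR3 x y w + hR3 x y w * ρ z + hR3 x y (b z w) - hρLY3

end Representation

section Induced

variable {K g V : Type*} [Field K] [AddCommGroup g] [Module K g] [AddCommGroup V] [Module K V]

def inducedBracket (ρ : g → Module.End K V) (T : V → g) (u v : V) : V :=
  ρ (T u) v - ρ (T v) u

theorem isBilin_inducedBracket {ρ : g → Module.End K V} {T : V → g} (hρ : IsLinearMap K ρ)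
    (hT : IsLinearMap K T) : IsBilin K (inducedBracket ρ T) := by
  refine ⟨fun v => ⟨fun u u' => ?_, fun c u => ?_⟩, fun u => ⟨fun v v' => ?_, fun c v => ?_⟩⟩ <;>
    simp only [inducedBracket, hT.map_add, hT.map_smul, hρ.map_add, hρ.map_smul,
      LinearMap.add_apply, LinearMap.smul_apply, map_add, map_smul] <;>
    module

variable [CharZero K]

def inducedTriple (b : g → g → g) (ρ : g → Module.End K V) (μ : g → g → Module.End K V)
    (T : V → g) (u v w : V) : V :=
  LYD K b ρ μ (T u) (T v) w + μ (T v) (T w) u - μ (T u) (T w) v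

variable {b : g → g → g} {t : g → g → g → g} {ρ : g → Module.End K V}
  {μ : g → g → Module.End K V} {T : V → g}

theorem isTrilin_inducedTriple (hD : IsBilin K (LYD K b ρ μ)) (hμ : IsBilin K μ)
    (hT : IsLinearMap K T) : IsTrilin K (inducedTriple b ρ μ T) := by
  refine ⟨fun v w => ⟨fun u u' => ?_, fun c u => ?_⟩, fun u w => ⟨fun v v' => ?_, fun c v => ?_⟩,
    fun u v => ⟨fun w w' => ?_, fun c w => ?_⟩⟩ <;>
    simp only [inducedTriple, hT.map_add, hT.map_smul, hD.map_add_left, hD.map_add_right,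
      hD.map_smul_left, hD.map_smul_right, hμ.map_add_left, hμ.map_add_right, hμ.map_smul_left,
      hμ.map_smul_right, LinearMap.add_apply, LinearMap.smul_apply, map_add, map_smul] <;>
    module

theorem inducedTriple_swap (hρ : IsLinearMap K ρ) (hb : ∀ x y, b x y = -b y x) (u v w : V) :
    inducedTriple b ρ μ T u v w = -inducedTriple b ρ μ T v u w := by
  simp only [inducedTriple, LYD_swap hρ hb (T u), LinearMap.neg_apply]
  abel

namespace IsRelRB

theorem induced_ly1 (hT : IsRelRB K b t ρ μ T) (u v w : V) :
    inducedBracket ρ T (inducedBracket ρ T u v) w + inducedBracket ρ T (inducedBracket ρ T v w) u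
      + inducedBracket ρ T (inducedBracket ρ T w u) v + inducedTriple b ρ μ T u v w
      + inducedTriple b ρ μ T v w u + inducedTriple b ρ μ T w u v = 0 := by
  simp only [inducedBracket, inducedTriple, ← hT.2.1, LYD, LinearMap.sub_apply,
    LinearMap.add_apply, Module.End.mul_apply, map_sub]
  abel

theorem induced_ly2 (hT : IsRelRB K b t ρ μ T) (h : IsLieYamaguti K b t)
    (hrep : IsLYRep K b t ρ μ) (u v w s : V) :
    inducedTriple b ρ μ T (inducedBracket ρ T u v) w s
      + inducedTriple b ρ μ T (inducedBracket ρ T v w) u s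
      + inducedTriple b ρ μ T (inducedBracket ρ T w u) v s = 0 := by
  have hD := congr($(hrep.LYD_bracket_cyclic h (T u) (T v) (T w)) s)
  have hR1 := hrep.2.2.1
  have e₁ := congr($(hR1 (T u) (T v) (T s)) w)
  have e₂ := congr($(hR1 (T v) (T w) (T s)) u)
  have e₃ := congr($(hR1 (T w) (T u) (T s)) v)
  simp only [inducedTriple, inducedBracket, ← hT.2.1, LinearMap.sub_apply, LinearMap.add_apply,
    Module.End.mul_apply, LinearMap.zero_apply, map_sub] at hD e₁ e₂ e₃ ⊢
  linear_combination (norm := module) hD - e₁ - e₂ - e₃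

theorem induced_ly3 (hT : IsRelRB K b t ρ μ T) (hrep : IsLYRep K b t ρ μ) (u v w s : V) :
    inducedTriple b ρ μ T u v (inducedBracket ρ T w s)
      = inducedBracket ρ T (inducedTriple b ρ μ T u v w) s
        + inducedBracket ρ T w (inducedTriple b ρ μ T u v s) := by
  obtain ⟨-, -, -, hR2, hR3, -, -⟩ := hrep
  have e₁ := congr($(hR3 (T u) (T v) (T w)) s)
  have e₂ := congr($(hR3 (T u) (T v) (T s)) w)
  have e₃ := congr($(hR2 (T v) (T w) (T s)) u)
  have e₄ := congr($(hR2 (T u) (T w) (T s)) v)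
  simp only [inducedTriple, inducedBracket, ← hT.2.1, ← hT.2.2, LinearMap.sub_apply,
    LinearMap.add_apply, Module.End.mul_apply, LinearMap.zero_apply, map_sub, map_add]
    at e₁ e₂ e₃ e₄ ⊢
  linear_combination (norm := module) e₂ + e₃ - e₁ - e₄

theorem induced_ly4 (hT : IsRelRB K b t ρ μ T) (h : IsLieYamaguti K b t)
    (hrep : IsLYRep K b t ρ μ) (u v w s q : V) :
    inducedTriple b ρ μ T u v (inducedTriple b ρ μ T w s q)
      = inducedTriple b ρ μ T (inducedTriple b ρ μ T u v w) s q
        + inducedTriple b ρ μ T w (inducedTriple b ρ μ T u v s) q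
        + inducedTriple b ρ μ T w s (inducedTriple b ρ μ T u v q) := by
  have hD := congr($(hrep.LYD_commutator h (T u) (T v) (T w) (T s)) q)
  obtain ⟨-, -, -, -, -, hR4, hR5⟩ := hrep
  have e₁ := congr($(hR5 (T u) (T v) (T w) (T q)) s)
  have e₂ := congr($(hR5 (T u) (T v) (T s) (T q)) w)
  have e₃ := congr($(hR4 (T v) (T w) (T s) (T q)) u)
  have e₄ := congr($(hR4 (T u) (T w) (T s) (T q)) v)
  simp only [inducedTriple, ← hT.2.2, LinearMap.sub_apply, LinearMap.add_apply,
    Module.End.mul_apply, LinearMap.zero_apply, map_sub, map_add] at hD e₁ e₂ e₃ e₄ ⊢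
  linear_combination (norm := module) hD + e₁ - e₂ - e₃ + e₄

theorem isLieYamaguti_induced (hT : IsRelRB K b t ρ μ T) (h : IsLieYamaguti K b t)
    (hrep : IsLYRep K b t ρ μ) : IsLieYamaguti K (inducedBracket ρ T) (inducedTriple b ρ μ T) := by
  have hρ : IsLinearMap K ρ := hrep.1
  have hμ : IsBilin K μ := hrep.2.1
  exact ⟨isBilin_inducedBracket hρ hT.1, isTrilin_inducedTriple (isBilin_LYD h.1 hρ hμ) hμ hT.1,
    fun u v => (neg_sub _ _).symm, inducedTriple_swap hρ h.2.2.1, hT.induced_ly1,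
    hT.induced_ly2 h hrep, hT.induced_ly3 hrep, hT.induced_ly4 h hrep⟩

end IsRelRB

end Induced

/-- the induced brackets on `V` form a Lie-Yamaguti algebra and `T` is a
homomorphism to `g`. -/
theorem statement11 (K g V : Type*) [Field K] [CharZero K] [AddCommGroup g] [Module K g]
    [AddCommGroup V] [Module K V]
    (b : g → g → g) (t : g → g → g → g) (h : IsLieYamaguti K b t)
    (ρ : g → Module.End K V) (μ : g → g → Module.End K V)
    (hrep : IsLYRep K b t ρ μ) (T : V → g) (hT : IsRelRB K b t ρ μ T) :
    IsLieYamaguti K (fun u v => ρ (T u) v - ρ (T v) u)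
      (fun u v w => LYD K b ρ μ (T u) (T v) w + μ (T v) (T w) u - μ (T u) (T w) v) ∧
    (∀ u v, T (ρ (T u) v - ρ (T v) u) = b (T u) (T v)) ∧
    (∀ u v w,
        T (LYD K b ρ μ (T u) (T v) w + μ (T v) (T w) u - μ (T u) (T w) v)
          = t (T u) (T v) (T w)) :=
  ⟨hT.isLieYamaguti_induced h hrep, fun u v => (hT.2.1 u v).symm,
    fun u v w => (hT.2.2 u v w).symm⟩
end

section
/- Let T: V→g be an invertible relative Rota-Baxter operator on a Lie-Yamaguti algebra (g,[·,·],⟨·,·,·⟩) with respect to a representation (V;ρ,μ), and let D(x,y):=μ(y,x)−μ(x,y)+ρ(x)ρ(y)−ρ(y)ρ(x)−ρ([x,y]). Define on g the operations x*y := T(ρ(x)T⁻¹(y)) and {x,y,z} := T(μ(y,z)T⁻¹(x)). Then (g,*,{·,·,·}) is a pre-Lie-Yamaguti algebra compatible with the given Lie-Yamaguti structure, i.e., for all x,y,z in g: x*y−y*x = [x,y] and {x,y,z}_D+{x,y,z}−{y,x,z} = ⟨x,y,z⟩. -/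
/-!
Transport everything along the linear isomorphism `T`. The Rota-Baxter identities say that
`[x,y] = T(ρ(x)T⁻¹y − ρ(y)T⁻¹x)` and `⟨x,y,z⟩ = T(D(x,y)T⁻¹z + μ(y,z)T⁻¹x − μ(x,z)T⁻¹y)`; hence
`[·,·]_C = [·,·]`, and then `ρ(y*x) = ρ(x*y) − ρ([x,y])` gives `{x,y,z}_D = T(D(x,y)T⁻¹z)`.
With these, the pre-Lie-Yamaguti axioms (P1), (P2), (P3), (P4), (P5) are `T` applied to the
representation axioms (R1), (R2), (R4), (R5), (R3) evaluated at a vector of `V`.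
-/

def inducedMul {K g V : Type*} [Field K] [AddCommGroup g] [Module K g] [AddCommGroup V]
    [Module K V] (e : V ≃ₗ[K] g) (ρ : g → Module.End K V) (x y : g) : g :=
  e (ρ x (e.symm y))

def inducedBr {K g V : Type*} [Field K] [AddCommGroup g] [Module K g] [AddCommGroup V]
    [Module K V] (e : V ≃ₗ[K] g) (μ : g → g → Module.End K V) (x y z : g) : g :=
  e (μ y z (e.symm x))

section

variable {K g V : Type*} [Field K] [AddCommGroup g] [Module K g]
  [AddCommGroup V] [Module K V] {b : g → g → g} {t : g → g → g → g}
  {ρ : g → Module.End K V} {μ : g → g → Module.End K V} {e : V ≃ₗ[K] g}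

theorem isBilin_inducedMul (hρ : IsLinearMap K ρ) : IsBilin K (inducedMul e ρ) :=
  ⟨fun _ => ⟨fun _ _ => by simp [inducedMul, hρ.map_add],
      fun _ _ => by simp [inducedMul, hρ.map_smul]⟩,
    fun _ => ⟨fun _ _ => by simp [inducedMul], fun _ _ => by simp [inducedMul]⟩⟩

theorem isTrilin_inducedBr (hμ : IsBilin K μ) : IsTrilin K (inducedBr e μ) :=
  ⟨fun _ _ => ⟨fun _ _ => by simp [inducedBr], fun _ _ => by simp [inducedBr]⟩,
    fun _ z => ⟨fun _ _ => by simp [inducedBr, (hμ.1 z).map_add],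
      fun _ _ => by simp [inducedBr, (hμ.1 z).map_smul]⟩,
    fun _ y => ⟨fun _ _ => by simp [inducedBr, (hμ.2 y).map_add],
      fun _ _ => by simp [inducedBr, (hμ.2 y).map_smul]⟩⟩

variable [CharZero K]

namespace IsRelRB

theorem bracket_eq (hT : IsRelRB K b t ρ μ e) (x y : g) :
    b x y = e (ρ x (e.symm y) - ρ y (e.symm x)) := by
  simpa using hT.2.1 (e.symm x) (e.symm y)

theorem ternary_eq (hT : IsRelRB K b t ρ μ e) (x y z : g) :
    t x y z = e (LYD K b ρ μ x y (e.symm z) + μ y z (e.symm x) - μ x z (e.symm y)) := by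
  simpa using hT.2.2 (e.symm x) (e.symm y) (e.symm z)

theorem preC_inducedMul (hT : IsRelRB K b t ρ μ e) (x y : g) :
    preC (inducedMul e ρ) x y = b x y := by
  rw [hT.bracket_eq, map_sub, preC, inducedMul, inducedMul]

theorem preD_induced (hT : IsRelRB K b t ρ μ e) (hρ : IsLinearMap K ρ) (x y z : g) :
    preD (inducedMul e ρ) (inducedBr e μ) x y z = e (LYD K b ρ μ x y (e.symm z)) := by
  have hρC : ρ (inducedMul e ρ y x) = ρ (inducedMul e ρ x y) - ρ (b x y) := by
    rw [← hρ.map_sub, ← hT.preC_inducedMul, preC, sub_sub_cancel]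
  simp only [preD, preAssoc, inducedBr, inducedMul, LinearEquiv.symm_apply_apply] at hρC ⊢
  simp only [hρC, LYD, ← map_sub, ← map_add, LinearMap.sub_apply, LinearMap.add_apply,
    Module.End.mul_apply]
  congr 1
  abel

theorem subT_induced (hT : IsRelRB K b t ρ μ e) (hρ : IsLinearMap K ρ) (x y z : g) :
    subT (inducedMul e ρ) (inducedBr e μ) x y z = t x y z := by
  rw [subT, hT.preD_induced hρ, hT.ternary_eq, inducedBr, inducedBr, map_sub, map_add]

theorem preLY1_induced (hT : IsRelRB K b t ρ μ e) (hrep : IsLYRep K b t ρ μ) (x y z w : g) :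
    inducedBr e μ z (preC (inducedMul e ρ) x y) w - inducedBr e μ (inducedMul e ρ y z) x w
      + inducedBr e μ (inducedMul e ρ x z) y w = 0 := by
  have h := LinearMap.congr_fun (hrep.2.2.1 x y w) (e.symm z)
  simp only [LinearMap.add_apply, LinearMap.sub_apply, Module.End.mul_apply,
    LinearMap.zero_apply] at h
  simp only [hT.preC_inducedMul, inducedBr, inducedMul, LinearEquiv.symm_apply_apply, ← map_sub,
    ← map_add, h, map_zero]

theorem preLY2_induced (hT : IsRelRB K b t ρ μ e) (hrep : IsLYRep K b t ρ μ) (x y z w : g) :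
    inducedBr e μ x y (preC (inducedMul e ρ) z w)
      = inducedMul e ρ z (inducedBr e μ x y w) - inducedMul e ρ w (inducedBr e μ x y z) := by
  have h := LinearMap.congr_fun (hrep.2.2.2.1 y z w) (e.symm x)
  simp only [LinearMap.add_apply, LinearMap.sub_apply, Module.End.mul_apply,
    LinearMap.zero_apply] at h
  simp only [hT.preC_inducedMul, inducedBr, inducedMul, LinearEquiv.symm_apply_apply, ← map_sub]
  congr 1
  linear_combination (norm := module) h

theorem preLY3_induced (hT : IsRelRB K b t ρ μ e) (hrep : IsLYRep K b t ρ μ) (x y z w v : g) :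
    inducedBr e μ (inducedBr e μ x y z) w v - inducedBr e μ (inducedBr e μ x y w) z v
      - inducedBr e μ x y (preD (inducedMul e ρ) (inducedBr e μ) z w v)
      - inducedBr e μ x y (inducedBr e μ z w v) + inducedBr e μ x y (inducedBr e μ w z v)
      + preD (inducedMul e ρ) (inducedBr e μ) z w (inducedBr e μ x y v) = 0 := by
  have h := LinearMap.congr_fun (hrep.2.2.2.2.2.1 y z w v) (e.symm x)
  simp only [hT.ternary_eq, map_add, map_sub, (hrep.2.1.2 y).map_add, (hrep.2.1.2 y).map_sub,
    LinearMap.add_apply, LinearMap.sub_apply, Module.End.mul_apply, LinearMap.zero_apply] at h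
  simp only [hT.preD_induced hrep.1, inducedBr, LinearEquiv.symm_apply_apply, ← map_sub,
    ← map_add, LinearEquiv.map_eq_zero_iff]
  linear_combination (norm := module) h

theorem preLY4_induced (hT : IsRelRB K b t ρ μ e) (hrep : IsLYRep K b t ρ μ) (x y z w v : g) :
    inducedBr e μ z (preD (inducedMul e ρ) (inducedBr e μ) x y w) v
      + inducedBr e μ z (inducedBr e μ x y w) v - inducedBr e μ z (inducedBr e μ y x w) v
      + inducedBr e μ z w (preD (inducedMul e ρ) (inducedBr e μ) x y v)
      + inducedBr e μ z w (inducedBr e μ x y v) - inducedBr e μ z w (inducedBr e μ y x v)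
      = preD (inducedMul e ρ) (inducedBr e μ) x y (inducedBr e μ z w v)
        - inducedBr e μ (preD (inducedMul e ρ) (inducedBr e μ) x y z) w v := by
  have h := LinearMap.congr_fun (hrep.2.2.2.2.2.2 x y w v) (e.symm z)
  simp only [hT.ternary_eq, map_add, map_sub, (hrep.2.1.1 v).map_add, (hrep.2.1.1 v).map_sub,
    (hrep.2.1.2 w).map_add, (hrep.2.1.2 w).map_sub,
    LinearMap.add_apply, LinearMap.sub_apply, Module.End.mul_apply] at h
  simp only [hT.preD_induced hrep.1, inducedBr, LinearEquiv.symm_apply_apply, ← map_sub,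
    ← map_add, EmbeddingLike.apply_eq_iff_eq]
  linear_combination (norm := module) h

theorem preLY5_induced (hT : IsRelRB K b t ρ μ e) (hrep : IsLYRep K b t ρ μ) (x y z w : g) :
    inducedMul e ρ (preD (inducedMul e ρ) (inducedBr e μ) x y z) w
      + inducedMul e ρ (inducedBr e μ x y z) w - inducedMul e ρ (inducedBr e μ y x z) w
      = preD (inducedMul e ρ) (inducedBr e μ) x y (inducedMul e ρ z w)
        - inducedMul e ρ z (preD (inducedMul e ρ) (inducedBr e μ) x y w) := by
  have h := LinearMap.congr_fun (hrep.2.2.2.2.1 x y z) (e.symm w)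
  simp only [hT.ternary_eq, map_add, map_sub, hrep.1.map_add, hrep.1.map_sub,
    LinearMap.add_apply, LinearMap.sub_apply, Module.End.mul_apply] at h
  simp only [hT.preD_induced hrep.1, inducedBr, inducedMul, LinearEquiv.symm_apply_apply,
    ← map_sub, ← map_add, EmbeddingLike.apply_eq_iff_eq]
  linear_combination (norm := module) h

theorem isPreLY_induced (hT : IsRelRB K b t ρ μ e) (hrep : IsLYRep K b t ρ μ) :
    IsPreLY K (inducedMul e ρ) (inducedBr e μ) :=
  ⟨isBilin_inducedMul hrep.1, isTrilin_inducedBr hrep.2.1, hT.preLY1_induced hrep,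
    hT.preLY2_induced hrep, hT.preLY3_induced hrep, hT.preLY4_induced hrep,
    hT.preLY5_induced hrep⟩

end IsRelRB

end

theorem statement12_general (K g V : Type*) [Field K] [CharZero K] [AddCommGroup g] [Module K g]
    [AddCommGroup V] [Module K V]
    (b : g → g → g) (t : g → g → g → g)
    (ρ : g → Module.End K V) (μ : g → g → Module.End K V)
    (hrep : IsLYRep K b t ρ μ) (T : V → g) (hT : IsRelRB K b t ρ μ T)
    (S : g → V) (hST : Function.LeftInverse S T) (hTS : Function.RightInverse S T) :
    IsPreLY K (fun x y => T (ρ x (S y))) (fun x y z => T (μ y z (S x))) ∧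
    (∀ x y, T (ρ x (S y)) - T (ρ y (S x)) = b x y) ∧
    (∀ x y z,
        preD (fun a c => T (ρ a (S c))) (fun a c d => T (μ c d (S a))) x y z
          + T (μ y z (S x)) - T (μ x z (S y)) = t x y z) := by
  let e : V ≃ₗ[K] g :=
    { IsLinearMap.mk' T hT.1 with invFun := S, left_inv := hST, right_inv := hTS }
  have he : IsRelRB K b t ρ μ e := hT
  exact ⟨he.isPreLY_induced hrep, he.preC_inducedMul, he.subT_induced hrep.1⟩

/-- an invertible relative Rota-Baxter operator induces a compatible
pre-Lie-Yamaguti algebra structure on `g`. -/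
theorem statement12 (K g V : Type*) [Field K] [CharZero K] [AddCommGroup g] [Module K g]
    [AddCommGroup V] [Module K V]
    (b : g → g → g) (t : g → g → g → g) (h : IsLieYamaguti K b t)
    (ρ : g → Module.End K V) (μ : g → g → Module.End K V)
    (hrep : IsLYRep K b t ρ μ) (T : V → g) (hT : IsRelRB K b t ρ μ T)
    (S : g → V) (hST : Function.LeftInverse S T) (hTS : Function.RightInverse S T) :
    IsPreLY K (fun x y => T (ρ x (S y))) (fun x y z => T (μ y z (S x))) ∧
    (∀ x y, T (ρ x (S y)) - T (ρ y (S x)) = b x y) ∧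
    (∀ x y z,
        preD (fun a c => T (ρ a (S c))) (fun a c d => T (μ c d (S a))) x y z
          + T (μ y z (S x)) - T (μ x z (S y)) = t x y z) :=
  statement12_general K g V b t ρ μ hrep T hT S hST hTS
end

section
/- Let (g,[·,·],⟨·,·,·⟩) be a finite-dimensional Lie-Yamaguti algebra over a field K of characteristic 0, and let T: g*→g be an invertible linear map that is skew-symmetric in the sense that α(T(β))+β(T(α))=0 for all α,β in g*. Define the bilinear form ω on g by ω(x,y) := (T⁻¹(x))(y). Then ω is a symplectic structure on g if and only if T is a relative Rota-Baxter operator on g with respect to the coadjoint representation (g*;ad*,−R*τ). -/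
namespace IsLieYamaguti

variable {K g : Type*} [Field K] [CharZero K] [AddCommGroup g] [Module K g]
  {b : g → g → g} {t : g → g → g → g}

def coadRho (h : IsLieYamaguti K b t) (x : g) : Module.End K (Module.Dual K g) :=
  -(IsLinearMap.mk' (fun z => b x z) (h.1.2 x)).dualMap

def coadMu (h : IsLieYamaguti K b t) (x y : g) : Module.End K (Module.Dual K g) :=
  (IsLinearMap.mk' (fun z => t z y x) (h.2.1.1 y x)).dualMap

variable (h : IsLieYamaguti K b t)
include h

@[simp]
lemma coadRho_apply (x z : g) (α : Module.Dual K g) : h.coadRho x α z = -α (b x z) := by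
  simp [coadRho]

@[simp]
lemma coadMu_apply (x y z : g) (α : Module.Dual K g) : h.coadMu x y α z = α (t z y x) := by
  simp [coadMu]

lemma LYD_coad_apply (x y z : g) (α : Module.Dual K g) :
    LYD K b h.coadRho h.coadMu x y α z = -α (t x y z) := by
  have hbs := h.2.2.1
  -- (LY1), rewritten with the skew-symmetry of both brackets
  have key : t z x y - t z y x + b y (b x z) - b x (b y z) + b (b x y) z = -t x y z := by
    rw [hbs y (b x z), hbs x z, (h.1.1 y).map_neg, neg_neg, hbs x (b y z), h.2.2.2.1 z y x,
      ← sub_eq_zero, ← h.2.2.2.2.1 x y z]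
    abel
  have key' := congrArg α key
  simp only [map_add, map_sub, map_neg] at key'
  simp only [LYD, LinearMap.sub_apply, LinearMap.add_apply, Module.End.mul_apply,
    coadRho_apply, coadMu_apply, neg_neg]
  linear_combination key'

variable {S : g → Module.Dual K g} (hS : ∀ x y, S x y = -S y x)
include hS

lemma bracket_cocycle_iff :
    (∀ x y z, S x (b y z) + S y (b z x) + S z (b x y) = 0) ↔
      ∀ x y, S (b x y) = h.coadRho x (S y) - h.coadRho y (S x) := by
  have hb : ∀ x y z, S y (b z x) = -S y (b x z) := fun x y z => by rw [h.2.2.1 z x, map_neg]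
  simp only [LinearMap.ext_iff, LinearMap.sub_apply, coadRho_apply]
  refine ⟨fun H x y z => ?_, fun H x y z => ?_⟩
  · linear_combination hS (b x y) z - H x y z + hb x y z
  · linear_combination hS z (b x y) - H x y z + hb x y z

lemma ternary_cocycle_iff :
    (∀ x y z w, S z (t x y w) - S x (t w z y) + S y (t w z x) - S w (t x y z) = 0) ↔
      ∀ x y w, S (t x y w) =
        LYD K b h.coadRho h.coadMu x y (S w) + h.coadMu y w (S x) - h.coadMu x w (S y) := by
  have ht : ∀ x y z w, S x (t w z y) = -S x (t z w y) :=
    fun x y z w => by rw [h.2.2.2.1 w z y, map_neg]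
  simp only [LinearMap.ext_iff, LinearMap.sub_apply, LinearMap.add_apply, LYD_coad_apply h,
    coadMu_apply]
  refine ⟨fun H x y w z => ?_, fun H x y z w => ?_⟩
  · linear_combination hS (t x y w) z - H x y z w - ht x y z w + ht y x z w
  · linear_combination hS z (t x y w) - H x y w z - ht x y z w + ht y x z w

end IsLieYamaguti

section

variable {K g V : Type*} [Field K] [CharZero K] [AddCommGroup g] [Module K g]
  [AddCommGroup V] [Module K V]

lemma isRelRB_iff_of_linearEquiv (b : g → g → g) (t : g → g → g → g)
    (ρ : g → Module.End K V) (μ : g → g → Module.End K V) (e : V ≃ₗ[K] g) :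
    IsRelRB K b t ρ μ e ↔
      (∀ x y, e.symm (b x y) = ρ x (e.symm y) - ρ y (e.symm x)) ∧
      ∀ x y z, e.symm (t x y z) =
        LYD K b ρ μ x y (e.symm z) + μ y z (e.symm x) - μ x z (e.symm y) := by
  refine (and_iff_right e.toLinearMap.isLinear).trans (and_congr ?_ ?_)
  · refine ⟨fun H x y => ?_, fun H u v => ?_⟩
    · rw [e.symm_apply_eq]
      simpa using H (e.symm x) (e.symm y)
    · rw [← e.symm_apply_eq]
      simpa using H (e u) (e v)
  · refine ⟨fun H x y z => ?_, fun H u v w => ?_⟩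
    · rw [e.symm_apply_eq]
      simpa using H (e.symm x) (e.symm y) (e.symm z)
    · rw [← e.symm_apply_eq]
      simpa using H (e u) (e v) (e w)

lemma isSymplectic_iff_of_linearEquiv (b : g → g → g) (t : g → g → g → g)
    (φ : g ≃ₗ[K] Module.Dual K g) (hφ : ∀ x y, φ x y = -φ y x) :
    IsSymplectic K b t (fun x y => φ x y) ↔
      (∀ x y z, φ x (b y z) + φ y (b z x) + φ z (b x y) = 0) ∧
      ∀ x y z w, φ z (t x y w) - φ x (t w z y) + φ y (t w z x) - φ w (t x y z) = 0 := by
  have hbilin : IsBilin K fun x y => φ x y :=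
    ⟨fun y => ⟨fun a a' => by simp, fun c a => by simp⟩, fun x => (φ x).isLinear⟩
  have hnondeg : ∀ x, (∀ y, φ x y = 0) → x = 0 :=
    fun x hx => φ.map_eq_zero_iff.mp (LinearMap.ext hx)
  exact (and_iff_right hbilin).trans <| (and_iff_right hφ).trans (and_iff_right hnondeg)

end

theorem statement14_general (K g : Type*) [Field K] [CharZero K] [AddCommGroup g] [Module K g]
    (b : g → g → g) (t : g → g → g → g) (h : IsLieYamaguti K b t)
    (T : Module.Dual K g → g) (hT : IsLinearMap K T)
    (S : g → Module.Dual K g)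
    (hST : Function.LeftInverse S T) (hTS : Function.RightInverse S T)
    (hskew : ∀ α β : Module.Dual K g, α (T β) + β (T α) = 0) :
    IsSymplectic K b t (fun x y => S x y) ↔
      IsRelRB K b t
        (fun x =>
          (-(IsLinearMap.mk' (fun z => b x z) (h.1.2 x)).dualMap :
            Module.End K (Module.Dual K g)))
        (fun x y =>
          ((IsLinearMap.mk' (fun z => t z y x) (h.2.1.1 y x)).dualMap :
            Module.End K (Module.Dual K g)))
        T := by
  let e : Module.Dual K g ≃ₗ[K] g :=
    { IsLinearMap.mk' T hT with invFun := S, left_inv := hST, right_inv := hTS }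
  have hS : ∀ x y, e.symm x y = -e.symm y x := fun x y => by
    have hskew' := hskew (S x) (S y)
    rw [hTS, hTS] at hskew'
    exact eq_neg_of_add_eq_zero_left hskew'
  change IsSymplectic K b t (fun x y => e.symm x y) ↔ IsRelRB K b t h.coadRho h.coadMu e
  rw [isSymplectic_iff_of_linearEquiv b t e.symm hS, isRelRB_iff_of_linearEquiv,
    h.bracket_cocycle_iff hS, h.ternary_cocycle_iff hS]

/-- for an invertible skew-symmetric `T : g* → g`, the form
`ω(x,y) = (T⁻¹ x)(y)` is a symplectic structure iff `T` is a relative Rota-Baxter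
operator with respect to the coadjoint representation. -/
theorem statement14 (K g : Type*) [Field K] [CharZero K] [AddCommGroup g] [Module K g]
    [FiniteDimensional K g]
    (b : g → g → g) (t : g → g → g → g) (h : IsLieYamaguti K b t)
    (T : Module.Dual K g → g) (hT : IsLinearMap K T)
    (S : g → Module.Dual K g)
    (hST : Function.LeftInverse S T) (hTS : Function.RightInverse S T)
    (hskew : ∀ α β : Module.Dual K g, α (T β) + β (T α) = 0) :
    IsSymplectic K b t (fun x y => S x y) ↔
      IsRelRB K b t
        (fun x =>
          (-(IsLinearMap.mk' (fun z => b x z) (h.1.2 x)).dualMap :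
            Module.End K (Module.Dual K g)))
        (fun x y =>
          ((IsLinearMap.mk' (fun z => t z y x) (h.2.1.1 y x)).dualMap :
            Module.End K (Module.Dual K g)))
        T :=
  statement14_general K g b t h T hT S hST hTS hskew
end
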